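/- arXiv:2306.05850 — 8 statements merged into one kernel-verified Lean document; each statement's English description precedes it below -/
import Mathlib

section
/- Let (ε_n) be a sequence of positive reals and ζ : ℕ × ℂ⁺ → [0,∞). Suppose there are constants α₀, α₁, α₂, α₃, α₄, α₅, α₆ > 0, c > 0 and C₁ > 0 such that: (i) ζ(n,z) ≤ C₁·|z|^{α₁}/(ε_n^{α₀}·Im(z)^{α₁+α₂}) for all n ∈ ℕ and all z ∈ ℂ⁺; and (ii) for every B > 0 there exists C_B > 0 such that ζ(n,z) ≤ C_B·ε_n·|z|^{α₃}/Im(z)^{α₃+α₄} for all n and all z with 0 < Im(z) ≤ B satisfying ε_n·|z|^{α₅}/Im(z)^{α₅+α₆} ≤ c. Then there exists α > 0 (one may take α = max(α₅(α₀+1)+α₁, α₆(α₀+1)+α₂, α₃, α₄)) such that for every B > 0 there exists C > 0 with ζ(n,z) ≤ C·ε_n·|z|^α/Im(z)^{2α} for all n ∈ ℕ and all z ∈ ℂ with 0 < Im(z) ≤ B; that is, ζ(n,z) ≤ O_z(ε_n). -/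
/-!
Write `r = ε_n |z|^{α₅} / Im(z)^{α₅+α₆}`. Where `r ≤ c` the local bound (ii) applies. Where `r > c`,
raising `c < r` to the power `α₀ + 1` gives `ε_n^{-α₀} ≤ ε_n (r / ε_n)^{α₀+1} / c^{α₀+1}`, which
trades the loss `ε_n^{-α₀}` in the a priori bound (i) for a factor `ε_n`, at the price of higher
powers of `|z|` and `1 / Im(z)`. Either way `ζ(n, z) ≤ K ε_n |z|^p / Im(z)^{p+q}` with `p, q ≤ α`,
and since `Im(z) ≤ |z|` and `Im(z) ≤ B` this is at most `K B^{α-q} ε_n |z|^α / Im(z)^{2α}`.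
-/

open Real

section RpowQuotient

variable {a y : ℝ}

lemma rpow_div_rpow_mul_rpow_div_rpow (ha : 0 < a) (hy : 0 < y) (p q p' q' : ℝ) :
    a ^ p / y ^ (p + q) * (a ^ p' / y ^ (p' + q')) = a ^ (p + p') / y ^ (p + p' + (q + q')) := by
  rw [div_mul_div_comm, ← rpow_add ha, ← rpow_add hy]
  ring_nf

lemma rpow_div_rpow_rpow (ha : 0 ≤ a) (hy : 0 ≤ y) (p q s : ℝ) :
    (a ^ p / y ^ (p + q)) ^ s = a ^ (p * s) / y ^ (p * s + q * s) := by
  rw [div_rpow (rpow_nonneg ha _) (rpow_nonneg hy _), ← rpow_mul ha, ← rpow_mul hy, add_mul]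

lemma rpow_div_rpow_le_mul_rpow_div_rpow (hy : 0 < y) (hya : y ≤ a) {B p q t : ℝ} (hyB : y ≤ B)
    (hp : p ≤ t) (hq : q ≤ t) :
    a ^ p / y ^ (p + q) ≤ B ^ (t - q) * (a ^ t / y ^ (2 * t)) := by
  have ha : 0 < a := hy.trans_le hya
  have hay : 1 ≤ a / y := (one_le_div hy).mpr hya
  have split (s u : ℝ) : a ^ s / y ^ (s + u) = (a / y) ^ s * y ^ (-u) := by
    rw [div_rpow ha.le hy.le, rpow_add hy, rpow_neg hy.le]
    field_simp
  calc a ^ p / y ^ (p + q) = (a / y) ^ p * (y ^ (t - q) * y ^ (-t)) := by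
        rw [split, ← rpow_add hy]; ring_nf
    _ ≤ (a / y) ^ t * (B ^ (t - q) * y ^ (-t)) := by gcongr
    _ = B ^ (t - q) * (a ^ t / y ^ (2 * t)) := by
        rw [two_mul, split]; ring

end RpowQuotient

lemma inv_rpow_le_of_le_mul {ε r c s : ℝ} (hε : 0 < ε) (hc : 0 < c) (hs : 0 ≤ s + 1)
    (h : c ≤ ε * r) : (ε ^ s)⁻¹ ≤ ε * r ^ (s + 1) / c ^ (s + 1) := by
  have hr : 0 ≤ r := nonneg_of_mul_nonneg_right (hc.le.trans h) hε
  have hpow : c ^ (s + 1) ≤ ε ^ s * ε * r ^ (s + 1) := by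
    rw [← rpow_add_one hε.ne', ← mul_rpow hε.le hr]
    exact rpow_le_rpow hc.le h hs
  rw [le_div_iff₀ (by positivity)]
  calc (ε ^ s)⁻¹ * c ^ (s + 1) ≤ (ε ^ s)⁻¹ * (ε ^ s * ε * r ^ (s + 1)) := by gcongr
    _ = ε * r ^ (s + 1) := by field_simp

lemma apriori_bound_le_of_lt {ε a y c C₁ α₀ α₁ α₂ α₅ α₆ : ℝ} (hε : 0 < ε) (ha : 0 < a)
    (hy : 0 < y) (hc : 0 < c) (hC₁ : 0 ≤ C₁) (hα₀ : 0 ≤ α₀ + 1)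
    (h : c < ε * a ^ α₅ / y ^ (α₅ + α₆)) :
    C₁ * a ^ α₁ / (ε ^ α₀ * y ^ (α₁ + α₂)) ≤
      C₁ / c ^ (α₀ + 1) * ε *
        (a ^ (α₅ * (α₀ + 1) + α₁) / y ^ (α₅ * (α₀ + 1) + α₁ + (α₆ * (α₀ + 1) + α₂))) := by
  have hgain := inv_rpow_le_of_le_mul hε hc hα₀ (h.le.trans_eq (mul_div_assoc _ _ _))
  rw [rpow_div_rpow_rpow ha.le hy.le] at hgain
  calc C₁ * a ^ α₁ / (ε ^ α₀ * y ^ (α₁ + α₂))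
        = C₁ * (ε ^ α₀)⁻¹ * (a ^ α₁ / y ^ (α₁ + α₂)) := by field_simp
    _ ≤ C₁ * (ε * (a ^ (α₅ * (α₀ + 1)) / y ^ (α₅ * (α₀ + 1) + α₆ * (α₀ + 1))) / c ^ (α₀ + 1))
          * (a ^ α₁ / y ^ (α₁ + α₂)) := by gcongr
    _ = _ := by rw [← rpow_div_rpow_mul_rpow_div_rpow ha hy]; ring

lemma le_mul_rpow_div_rpow_of_le {x K ε a y B p q t : ℝ} (hK : 0 ≤ K) (hε : 0 ≤ ε)
    (hy : 0 < y) (hya : y ≤ a) (hyB : y ≤ B) (hp : p ≤ t) (hq : q ≤ t)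
    (h : x ≤ K * ε * (a ^ p / y ^ (p + q))) :
    x ≤ K * B ^ (t - q) * ε * a ^ t / y ^ (2 * t) := by
  calc x ≤ K * ε * (B ^ (t - q) * (a ^ t / y ^ (2 * t))) := by
        grw [h, rpow_div_rpow_le_mul_rpow_div_rpow hy hya hyB hp hq]
    _ = K * B ^ (t - q) * ε * a ^ t / y ^ (2 * t) := by ring

theorem stmt_0_general (ε : ℕ → ℝ) (hε : ∀ n, 0 < ε n)
    (ζ : ℕ → ℂ → ℝ)
    (α₀ α₁ α₂ α₃ α₄ α₅ α₆ : ℝ)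
    (hα₀ : 0 < α₀) (hα₃ : 0 < α₃)
    (c C₁ : ℝ) (hc : 0 < c) (hC₁ : 0 < C₁)
    (h1 : ∀ (n : ℕ) (z : ℂ), 0 < z.im →
      ζ n z ≤ C₁ * ‖z‖ ^ α₁ / (ε n ^ α₀ * z.im ^ (α₁ + α₂)))
    (h2 : ∀ B > (0:ℝ), ∃ C > (0:ℝ), ∀ (n : ℕ) (z : ℂ), 0 < z.im → z.im ≤ B →
      ε n * ‖z‖ ^ α₅ / z.im ^ (α₅ + α₆) ≤ c →
      ζ n z ≤ C * ε n * ‖z‖ ^ α₃ / z.im ^ (α₃ + α₄)) :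
    ∃ α > (0:ℝ),
      α = max (max (α₅ * (α₀ + 1) + α₁) (α₆ * (α₀ + 1) + α₂)) (max α₃ α₄) ∧
      ∀ B > (0:ℝ), ∃ C > (0:ℝ), ∀ (n : ℕ) (z : ℂ), 0 < z.im → z.im ≤ B →
        ζ n z ≤ C * ε n * ‖z‖ ^ α / z.im ^ (2 * α) := by
  set p := α₅ * (α₀ + 1) + α₁
  set q := α₆ * (α₀ + 1) + α₂
  set α := max (max p q) (max α₃ α₄)
  have hpα : p ≤ α := (le_max_left _ _).trans (le_max_left _ _)
  have hqα : q ≤ α := (le_max_right _ _).trans (le_max_left _ _)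
  have hα₃α : α₃ ≤ α := (le_max_left _ _).trans (le_max_right _ _)
  have hα₄α : α₄ ≤ α := (le_max_right _ _).trans (le_max_right _ _)
  refine ⟨α, hα₃.trans_le hα₃α, rfl, fun B hB => ?_⟩
  obtain ⟨C₂, hC₂, h2B⟩ := h2 B hB
  refine ⟨max (C₂ * B ^ (α - α₄)) (C₁ / c ^ (α₀ + 1) * B ^ (α - q)),
    lt_max_of_lt_left (by positivity), fun n z hy hyB => ?_⟩
  have hya : z.im ≤ ‖z‖ := Complex.im_le_norm z
  have hεn : 0 ≤ ε n := (hε n).le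
  by_cases hsmall : ε n * ‖z‖ ^ α₅ / z.im ^ (α₅ + α₆) ≤ c
  · have hlocal := h2B n z hy hyB hsmall
    rw [mul_div_assoc] at hlocal
    calc ζ n z ≤ C₂ * B ^ (α - α₄) * ε n * ‖z‖ ^ α / z.im ^ (2 * α) :=
          le_mul_rpow_div_rpow_of_le hC₂.le hεn hy hya hyB hα₃α hα₄α hlocal
      _ ≤ _ := by gcongr; exact le_max_left _ _
  · have hlarge := (h1 n z hy).trans (apriori_bound_le_of_lt (hε n) (hy.trans_le hya) hy hc
      hC₁.le (by linarith : 0 ≤ α₀ + 1) (not_le.mp hsmall))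
    calc ζ n z ≤ C₁ / c ^ (α₀ + 1) * B ^ (α - q) * ε n * ‖z‖ ^ α / z.im ^ (2 * α) :=
          le_mul_rpow_div_rpow_of_le (by positivity) hεn hy hya hyB hpα hqα hlarge
      _ ≤ _ := by gcongr; exact le_max_right _ _

theorem stmt_0 (ε : ℕ → ℝ) (hε : ∀ n, 0 < ε n)
    (ζ : ℕ → ℂ → ℝ) (hζ : ∀ (n : ℕ) (z : ℂ), 0 < z.im → 0 ≤ ζ n z)
    (α₀ α₁ α₂ α₃ α₄ α₅ α₆ : ℝ)
    (hα₀ : 0 < α₀) (hα₁ : 0 < α₁) (hα₂ : 0 < α₂) (hα₃ : 0 < α₃)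
    (hα₄ : 0 < α₄) (hα₅ : 0 < α₅) (hα₆ : 0 < α₆)
    (c C₁ : ℝ) (hc : 0 < c) (hC₁ : 0 < C₁)
    (h1 : ∀ (n : ℕ) (z : ℂ), 0 < z.im →
      ζ n z ≤ C₁ * ‖z‖ ^ α₁ / (ε n ^ α₀ * z.im ^ (α₁ + α₂)))
    (h2 : ∀ B > (0:ℝ), ∃ C > (0:ℝ), ∀ (n : ℕ) (z : ℂ), 0 < z.im → z.im ≤ B →
      ε n * ‖z‖ ^ α₅ / z.im ^ (α₅ + α₆) ≤ c →
      ζ n z ≤ C * ε n * ‖z‖ ^ α₃ / z.im ^ (α₃ + α₄)) :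
    ∃ α > (0:ℝ),
      α = max (max (α₅ * (α₀ + 1) + α₁) (α₆ * (α₀ + 1) + α₂)) (max α₃ α₄) ∧
      ∀ B > (0:ℝ), ∃ C > (0:ℝ), ∀ (n : ℕ) (z : ℂ), 0 < z.im → z.im ≤ B →
        ζ n z ≤ C * ε n * ‖z‖ ^ α / z.im ^ (2 * α) :=
  stmt_0_general ε hε ζ α₀ α₁ α₂ α₃ α₄ α₅ α₆ hα₀ hα₃ c C₁ hc hC₁ h1 h2
end

section
/- Let f : ℝ → ℝ be Lipschitz continuous, and for r ∈ ℕ define Ψ_r : (0,∞) → ℝ by Ψ_r(σ) = σ^{−r}·∫_ℝ f(σt)·h_r(t) dγ(t). Then each Ψ_r is infinitely differentiable on (0,∞), and Ψ_r'(σ) = σ·Ψ_{r+2}(σ) for every σ > 0. -/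
open MeasureTheory ProbabilityTheory Filter
open scoped NNReal

noncomputable def hermiteP : ℕ → ℝ → ℝ
  | 0 => fun _ => 1
  | (r+1) => fun t => t * hermiteP r t - deriv (hermiteP r) t

/-- The normalized Hermite polynomials `ĥ_r = h_r / √(r!)`. -/
noncomputable def hermiteN (r : ℕ) (t : ℝ) : ℝ := hermiteP r t / Real.sqrt (Nat.factorial r)

namespace StmtTwoAux

open Polynomial Complex Set Metric
open scoped ENNReal

/-! ### Polynomial lemmas -/

lemma derivative_hermite (n : ℕ) :
    derivative (hermite (n+1)) = ((n : ℤ[X]) + 1) * hermite n := by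
  induction n with
  | zero => simp [Polynomial.hermite_one]
  | succ n ih =>
      rw [hermite_succ (n+1), derivative_sub, derivative_mul, derivative_X, one_mul, ih,
        derivative_mul]
      simp only [derivative_add, derivative_natCast, derivative_one, add_zero, zero_mul, zero_add]
      rw [hermite_succ n]
      push_cast
      ring

lemma hermite_identity (n : ℕ) :
    hermite (n+2) + (n : ℤ[X]) * hermite n
      = (X^2 - 1) * hermite n - X * derivative (hermite n) := by
  rw [show n+2 = (n+1)+1 from rfl, hermite_succ (n+1), derivative_hermite n, hermite_succ n]
  push_cast
  ring

noncomputable def HC (n : ℕ) (w : ℂ) : ℂ := aeval w (hermite n)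
noncomputable def HC' (n : ℕ) (w : ℂ) : ℂ := aeval w (derivative (hermite n))

lemma HC_zero (w : ℂ) : HC 0 w = 1 := by simp [HC]

lemma HC_one (w : ℂ) : HC 1 w = w := by simp [HC, Polynomial.hermite_one]

lemma HC'_succ (n : ℕ) (w : ℂ) : HC' (n+1) w = ((n:ℂ)+1) * HC n w := by
  rw [HC', derivative_hermite, HC]
  simp [map_mul, map_add, map_natCast]

lemma HC_succ (n : ℕ) (w : ℂ) : HC (n+1) w = w * HC n w - HC' n w := by
  rw [HC, HC', hermite_succ, map_sub, map_mul, aeval_X]; rfl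

lemma HC_identity (n : ℕ) (w : ℂ) :
    HC (n+2) w + (n : ℂ) * HC n w = (w^2 - 1) * HC n w - w * HC' n w := by
  have h := congrArg (aeval w) (hermite_identity n)
  simpa [HC, HC', map_add, map_sub, map_mul, map_pow, map_natCast] using h

lemma HC_bound (n : ℕ) : ∃ C : ℝ, 0 ≤ C ∧ ∀ w : ℂ, ‖HC n w‖ ≤ C * (1 + ‖w‖)^n := by
  suffices H : ∀ n : ℕ, (∃ C : ℝ, 0 ≤ C ∧ ∀ w : ℂ, ‖HC n w‖ ≤ C * (1 + ‖w‖)^n) ∧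
      (∃ C : ℝ, 0 ≤ C ∧ ∀ w : ℂ, ‖HC (n+1) w‖ ≤ C * (1 + ‖w‖)^(n+1)) from (H n).1
  intro n
  induction n with
  | zero =>
      refine ⟨⟨1, zero_le_one, fun w => by simp [HC_zero]⟩,
        ⟨1, zero_le_one, fun w => ?_⟩⟩
      have h0 : (0:ℝ) ≤ ‖w‖ := norm_nonneg w
      simp only [zero_add, HC_one, one_mul, pow_one]
      linarith
  | succ n ih =>
      obtain ⟨⟨C0, hC0, h0⟩, ⟨C1, hC1, h1⟩⟩ := ih
      refine ⟨⟨C1, hC1, h1⟩, ⟨C1 + ((n:ℝ)+1) * C0, by positivity, fun w => ?_⟩⟩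
      have hw : (0:ℝ) ≤ ‖w‖ := norm_nonneg w
      have hb : (1:ℝ) ≤ 1 + ‖w‖ := by linarith
      have e : HC (n+2) w = w * HC (n+1) w - ((n:ℂ)+1) * HC n w := by
        rw [HC_succ (n+1) w, HC'_succ]
      rw [e]
      have bound1 : ‖w * HC (n+1) w‖ ≤ C1 * (1+‖w‖)^(n+2) := by
        rw [norm_mul]
        calc ‖w‖ * ‖HC (n+1) w‖ ≤ (1+‖w‖) * (C1 * (1+‖w‖)^(n+1)) := by
              apply mul_le_mul (by linarith) (h1 w) (norm_nonneg _) (by linarith)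
          _ = C1 * (1+‖w‖)^(n+2) := by ring
      have bound2 : ‖((n:ℂ)+1) * HC n w‖ ≤ ((n:ℝ)+1) * C0 * (1+‖w‖)^(n+2) := by
        rw [norm_mul]
        have hn : ‖((n:ℂ)+1)‖ = (n:ℝ)+1 := by
          rw [show ((n:ℂ)+1) = ((n+1 : ℕ) : ℂ) by push_cast; ring, Complex.norm_natCast]
          push_cast; ring
        rw [hn]
        have hpow : (1+‖w‖)^n ≤ (1+‖w‖)^(n+2) := pow_le_pow_right₀ hb (by omega)
        calc ((n:ℝ)+1) * ‖HC n w‖ ≤ ((n:ℝ)+1) * (C0 * (1+‖w‖)^n) := by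
              apply mul_le_mul_of_nonneg_left (h0 w) (by positivity)
          _ ≤ ((n:ℝ)+1) * (C0 * (1+‖w‖)^(n+2)) := by
              apply mul_le_mul_of_nonneg_left _ (by positivity)
              exact mul_le_mul_of_nonneg_left hpow hC0
          _ = ((n:ℝ)+1) * C0 * (1+‖w‖)^(n+2) := by ring
      calc ‖w * HC (n+1) w - ((n:ℂ)+1) * HC n w‖
          ≤ ‖w * HC (n+1) w‖ + ‖((n:ℂ)+1) * HC n w‖ := norm_sub_le _ _
        _ ≤ C1 * (1+‖w‖)^(n+2) + ((n:ℝ)+1) * C0 * (1+‖w‖)^(n+2) := add_le_add bound1 bound2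
        _ = (C1 + ((n:ℝ)+1) * C0) * (1+‖w‖)^(n+2) := by ring

lemma hermiteP_eq (n : ℕ) : hermiteP n = fun t : ℝ => (aeval t (hermite n) : ℝ) := by
  induction n with
  | zero => funext t; simp [hermiteP]
  | succ n ih =>
      funext t
      show t * hermiteP n t - deriv (hermiteP n) t = _
      rw [ih]
      rw [Polynomial.deriv_aeval]
      rw [hermite_succ]
      simp [map_sub, map_mul, aeval_X]

lemma HC_ofReal (n : ℕ) (x : ℝ) : HC n (x : ℂ) = ((hermiteP n x : ℝ) : ℂ) := by
  rw [hermiteP_eq, HC]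
  simpa using (Polynomial.aeval_algHom_apply (Complex.ofRealHom.toIntAlgHom) x (hermite n))


/-! ### The complex kernel -/

noncomputable def KC (f : ℝ → ℝ) (m : ℕ) (z : ℂ) (u : ℝ) : ℂ :=
  ((f u : ℝ) : ℂ) * (HC m ((u:ℂ) * z⁻¹) *
    (((Real.sqrt (2*Real.pi) : ℝ) : ℂ)⁻¹ * z⁻¹ * Complex.exp (-((u:ℂ)^2/2) * (z^2)⁻¹)))

noncomputable def GC (f : ℝ → ℝ) (m : ℕ) (z : ℂ) : ℂ := ∫ u : ℝ, KC f m z u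

lemma continuous_KC (f : ℝ → ℝ) (hf : Continuous f) (m : ℕ) (z : ℂ) :
    Continuous (fun u => KC f m z u) := by
  unfold KC
  have h1 : Continuous fun u : ℝ => ((u:ℝ):ℂ) := Complex.continuous_ofReal
  refine (h1.comp hf).mul (Continuous.mul ?_ (Continuous.mul continuous_const ?_))
  · exact ((hermite m).continuous_aeval).comp (h1.mul continuous_const)
  · exact Complex.continuous_exp.comp ((((h1.pow 2).div_const 2).neg).mul continuous_const)

lemma f_linear_bound {L : ℝ≥0} {f : ℝ → ℝ} (hf : LipschitzWith L f) (u : ℝ) :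
    |f u| ≤ (|f 0| + L) * (1 + |u|) := by
  have h := hf.dist_le_mul u 0
  rw [Real.dist_eq, Real.dist_eq, sub_zero] at h
  have h2 : |f u| - |f 0| ≤ |f u - f 0| := by
    have := abs_sub_abs_le_abs_sub (f u) (f 0); linarith
  have hL : (0:ℝ) ≤ L := L.coe_nonneg
  have h0 : (0:ℝ) ≤ |f 0| := abs_nonneg _
  have hu : (0:ℝ) ≤ |u| := abs_nonneg _
  nlinarith

lemma norm_KC_le (f : ℝ → ℝ) {L : ℝ≥0} (hf : LipschitzWith L f) (m : ℕ) {B δ : ℝ}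
    (hB : 0 ≤ B) :
    ∃ A : ℝ, 0 ≤ A ∧ ∀ (z : ℂ) (u : ℝ), ‖z⁻¹‖ ≤ B → δ ≤ ((z^2)⁻¹).re →
      ‖KC f m z u‖ ≤ A * ((1+|u|)^(m+1) * Real.exp (-(δ/2) * u^2)) := by
  obtain ⟨C, hC0, hC⟩ := HC_bound m
  refine ⟨(|f 0| + L) * (C * (1+B)^m) * ((Real.sqrt (2*Real.pi))⁻¹ * B), by positivity,
    fun z u hz1 hz2 => ?_⟩
  have hsq : (0:ℝ) ≤ (Real.sqrt (2*Real.pi))⁻¹ := by positivity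
  have e1 : ‖KC f m z u‖ = |f u| * (‖HC m ((u:ℂ) * z⁻¹)‖ *
      ((Real.sqrt (2*Real.pi))⁻¹ * ‖z⁻¹‖ * Real.exp (-(u^2/2) * ((z^2)⁻¹).re))) := by
    have harg : -((u:ℂ)^2/2) * (z^2)⁻¹ = ((-(u^2/2) : ℝ) : ℂ) * (z^2)⁻¹ := by push_cast; ring
    rw [KC, harg]
    simp only [norm_mul, norm_inv, Complex.norm_real, Real.norm_eq_abs,
      Complex.norm_exp, Complex.re_ofReal_mul, _root_.abs_of_nonneg (Real.sqrt_nonneg _)]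
  rw [e1]
  have hfu : |f u| ≤ (|f 0| + L) * (1 + |u|) := f_linear_bound hf u
  have hH : ‖HC m ((u:ℂ) * z⁻¹)‖ ≤ (C * (1+B)^m) * (1+|u|)^m := by
    have h1 : ‖(u:ℂ) * z⁻¹‖ ≤ B * |u| := by
      rw [norm_mul, Complex.norm_real, Real.norm_eq_abs, mul_comm]
      exact mul_le_mul_of_nonneg_right hz1 (abs_nonneg u)
    have h2 : 1 + ‖(u:ℂ) * z⁻¹‖ ≤ (1+B) * (1+|u|) := by nlinarith [abs_nonneg u]
    calc ‖HC m ((u:ℂ) * z⁻¹)‖ ≤ C * (1 + ‖(u:ℂ) * z⁻¹‖)^m := hC _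
      _ ≤ C * ((1+B) * (1+|u|))^m := by
          apply mul_le_mul_of_nonneg_left _ hC0
          exact pow_le_pow_left₀ (by positivity) h2 m
      _ = (C * (1+B)^m) * (1+|u|)^m := by rw [mul_pow]; ring
  have hexp : Real.exp (-(u^2/2) * ((z^2)⁻¹).re) ≤ Real.exp (-(δ/2) * u^2) := by
    apply Real.exp_le_exp.mpr
    nlinarith [sq_nonneg u]
  have hz1' : (0:ℝ) ≤ ‖z⁻¹‖ := norm_nonneg _
  calc |f u| * (‖HC m ((u:ℂ) * z⁻¹)‖ *
        ((Real.sqrt (2*Real.pi))⁻¹ * ‖z⁻¹‖ * Real.exp (-(u^2/2) * ((z^2)⁻¹).re)))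
      ≤ ((|f 0| + L) * (1 + |u|)) * (((C * (1+B)^m) * (1+|u|)^m) *
        ((Real.sqrt (2*Real.pi))⁻¹ * B * Real.exp (-(δ/2) * u^2))) := by
        apply mul_le_mul hfu _ (by positivity) (by positivity)
        apply mul_le_mul hH _ (by positivity) (by positivity)
        apply mul_le_mul _ hexp (Real.exp_pos _).le (by positivity)
        exact mul_le_mul_of_nonneg_left hz1 hsq
    _ = ((|f 0| + L) * (C * (1+B)^m) * ((Real.sqrt (2*Real.pi))⁻¹ * B)) *
        ((1+|u|)^(m+1) * Real.exp (-(δ/2) * u^2)) := by ring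

lemma integrable_one_add_pow_exp (n : ℕ) {c : ℝ} (hc : 0 < c) :
    Integrable (fun u : ℝ => (1+|u|)^n * Real.exp (-c*u^2)) := by
  have key : ∀ k : ℕ, Integrable (fun u : ℝ => |u|^k * Real.exp (-c*u^2)) := by
    intro k
    have h1 : (-1:ℝ) < (k:ℝ) := lt_of_lt_of_le (by norm_num) (Nat.cast_nonneg k)
    have h := (integrable_rpow_mul_exp_neg_mul_sq hc h1).abs
    refine h.congr (ae_of_all _ fun u => ?_)
    simp only [abs_mul, Real.rpow_natCast, Real.abs_exp]
    rw [_root_.abs_pow]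
  have hrw : (fun u : ℝ => (1+|u|)^n * Real.exp (-c*u^2))
      = fun u => ∑ k ∈ Finset.range (n+1),
          (n.choose k : ℝ) * (|u|^(n-k) * Real.exp (-c*u^2)) := by
    funext u
    rw [add_pow, Finset.sum_mul]
    apply Finset.sum_congr rfl
    intro k hk
    rw [one_pow]
    ring
  rw [hrw]
  exact integrable_finset_sum _ (fun k _ => (key (n-k)).const_mul _)

lemma integrable_KC (f : ℝ → ℝ) {L : ℝ≥0} (hf : LipschitzWith L f) (m : ℕ) {z : ℂ}
    (h0 : z ≠ 0) (hre : 0 < ((z^2)⁻¹).re) :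
    Integrable (fun u : ℝ => KC f m z u) := by
  obtain ⟨A, hA0, hA⟩ := norm_KC_le f hf m (B := ‖z⁻¹‖) (δ := ((z^2)⁻¹).re) (norm_nonneg _)
  have hint : Integrable (fun u : ℝ =>
      A * ((1+|u|)^(m+1) * Real.exp (-(((z^2)⁻¹).re/2) * u^2))) :=
    (integrable_one_add_pow_exp (m+1) (half_pos hre)).const_mul A
  exact Integrable.mono' hint ((continuous_KC f hf.continuous m z).aestronglyMeasurable)
    (ae_of_all _ fun u => hA z u le_rfl le_rfl)


lemma hasDerivAt_KC (f : ℝ → ℝ) (m : ℕ) (u : ℝ) {z : ℂ} (hz : z ≠ 0) :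
    HasDerivAt (fun z => KC f m z u) (z⁻¹ * (KC f (m+2) z u + (m:ℂ) * KC f m z u)) z := by
  have hz2 : z^2 ≠ 0 := pow_ne_zero _ hz
  set cc : ℂ := (((Real.sqrt (2*Real.pi) : ℝ) : ℂ))⁻¹ with hcc
  have h1 : HasDerivAt (fun y : ℂ => (u:ℂ) * y⁻¹) ((u:ℂ) * -(z^2)⁻¹) z :=
    HasDerivAt.const_mul _ (hasDerivAt_inv hz)
  have h2 : HasDerivAt (fun y : ℂ => HC m ((u:ℂ) * y⁻¹))
      (HC' m ((u:ℂ)*z⁻¹) * ((u:ℂ) * -(z^2)⁻¹)) z := by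
    exact
      (Polynomial.hasDerivAt_aeval (hermite m) ((u:ℂ) * z⁻¹)).comp z h1
  have h3 : HasDerivAt (fun y : ℂ => (y^2)⁻¹) (-2 * (z⁻¹)^3) z := by
    refine ((hasDerivAt_pow 2 z).inv hz2).congr_deriv ?_
    field_simp
    ring
  have h4 := (HasDerivAt.const_mul (-((u:ℂ)^2/2)) h3).cexp
  have h5 := (HasDerivAt.const_mul cc (hasDerivAt_inv hz)).mul h4
  have h6 := (h2.mul h5).const_mul ((f u : ℝ) : ℂ)
  have hfun : (fun z => KC f m z u) = (fun y : ℂ => ((f u : ℝ) : ℂ) *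
      ((fun y : ℂ => HC m ((u:ℂ) * y⁻¹)) y *
        ((fun y : ℂ => cc * y⁻¹) y * (fun y : ℂ => Complex.exp (-((u:ℂ)^2/2) * (y^2)⁻¹)) y))) := by
    funext y; simp only [KC, hcc, mul_assoc]
  rw [hfun]
  refine h6.congr_deriv (Eq.symm ?_)
  -- now the algebraic identity between derivative values
  have key : HC (m+2) ((u:ℂ)*z⁻¹) = (((u:ℂ)*z⁻¹)^2 - 1) * HC m ((u:ℂ)*z⁻¹)
      - ((u:ℂ)*z⁻¹) * HC' m ((u:ℂ)*z⁻¹) - (m:ℂ) * HC m ((u:ℂ)*z⁻¹) := by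
    have h := HC_identity m ((u:ℂ)*z⁻¹); linear_combination h
  simp only [KC, hcc, Pi.mul_apply]
  rw [key]
  simp only [← inv_pow]
  ring

lemma hasDerivAt_GC (f : ℝ → ℝ) {L : ℝ≥0} (hf : LipschitzWith L f) (m : ℕ) {z₀ : ℂ}
    (h0 : z₀ ≠ 0) (hre : 0 < ((z₀^2)⁻¹).re) :
    HasDerivAt (GC f m) (z₀⁻¹ * (GC f (m+2) z₀ + (m:ℂ) * GC f m z₀)) z₀ := by
  set B : ℝ := ‖z₀⁻¹‖ + 1 with hB
  set δ : ℝ := ((z₀^2)⁻¹).re / 2 with hδ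
  have hBpos : 0 < B := by positivity
  have hδpos : 0 < δ := half_pos hre
  obtain ⟨A₀, hA₀0, hA₀⟩ := norm_KC_le f hf m (B := B) (δ := δ) hBpos.le
  obtain ⟨A₂, hA₂0, hA₂⟩ := norm_KC_le f hf (m+2) (B := B) (δ := δ) hBpos.le
  set U : Set ℂ := {z : ℂ | z ≠ 0 ∧ ‖z⁻¹‖ < B ∧ δ < ((z^2)⁻¹).re} with hU
  have hUopen : IsOpen U := by
    have h1 : IsOpen {z : ℂ | z ≠ 0} := isOpen_ne
    have hc1 : ContinuousOn (fun z : ℂ => ‖z⁻¹‖) {z : ℂ | z ≠ 0} :=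
      (continuousOn_id.inv₀ (fun z hz => hz)).norm
    have hc2 : ContinuousOn (fun z : ℂ => ((z^2)⁻¹).re) {z : ℂ | z ≠ 0} :=
      Complex.continuous_re.comp_continuousOn
        (((continuous_pow 2).continuousOn).inv₀ (fun z hz => pow_ne_zero 2 hz))
    have : U = ({z : ℂ | z ≠ 0} ∩ (fun z : ℂ => ‖z⁻¹‖) ⁻¹' Set.Iio B) ∩
        ({z : ℂ | z ≠ 0} ∩ (fun z : ℂ => ((z^2)⁻¹).re) ⁻¹' Set.Ioi δ) := by
      ext z; simp only [hU, Set.mem_setOf_eq, Set.mem_inter_iff, Set.mem_preimage,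
        Set.mem_Iio, Set.mem_Ioi]; tauto
    rw [this]
    exact (hc1.isOpen_inter_preimage h1 isOpen_Iio).inter
      (hc2.isOpen_inter_preimage h1 isOpen_Ioi)
  have hz₀U : z₀ ∈ U := ⟨h0, by simp [hB], half_lt_self hre⟩
  obtain ⟨ε, hε0, hεU⟩ := Metric.isOpen_iff.mp hUopen z₀ hz₀U
  set bnd : ℝ → ℝ := fun u => B * (A₂ * ((1+|u|)^(m+3) * Real.exp (-(δ/2)*u^2)))
    + B * ((m:ℝ) * (A₀ * ((1+|u|)^(m+1) * Real.exp (-(δ/2)*u^2)))) with hbnd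
  have hbnd_int : Integrable bnd := by
    apply Integrable.add
    · exact (((integrable_one_add_pow_exp (m+3) (half_pos hδpos)).const_mul A₂).const_mul B)
    · exact ((((integrable_one_add_pow_exp (m+1) (half_pos hδpos)).const_mul A₀).const_mul
        (m:ℝ)).const_mul B)
  have hmem : ∀ z ∈ Metric.ball z₀ ε, z ≠ 0 ∧ ‖z⁻¹‖ ≤ B ∧ δ ≤ ((z^2)⁻¹).re := by
    intro z hz
    obtain ⟨hz1, hz2, hz3⟩ := hεU hz
    exact ⟨hz1, hz2.le, hz3.le⟩
  have key := hasDerivAt_integral_of_dominated_loc_of_deriv_le (μ := (volume : Measure ℝ))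
    (F := fun z u => KC f m z u)
    (F' := fun (z : ℂ) (u : ℝ) => z⁻¹ * (KC f (m+2) z u + (m:ℂ) * KC f m z u))
    (bound := bnd) (Metric.ball_mem_nhds z₀ hε0)
    (Filter.Eventually.of_forall fun z => (continuous_KC f hf.continuous m z).aestronglyMeasurable)
    (integrable_KC f hf m h0 hre)
    (by
      apply Continuous.aestronglyMeasurable
      exact continuous_const.mul ((continuous_KC f hf.continuous (m+2) z₀).add
        (continuous_const.mul (continuous_KC f hf.continuous m z₀))))
    (ae_of_all _ (fun u z hz => by
      obtain ⟨hz1, hz2, hz3⟩ := hmem z hz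
      have b2 := hA₂ z u hz2 hz3
      have b0 := hA₀ z u hz2 hz3
      calc ‖z⁻¹ * (KC f (m+2) z u + (m:ℂ) * KC f m z u)‖
          = ‖z⁻¹‖ * ‖KC f (m+2) z u + (m:ℂ) * KC f m z u‖ := norm_mul _ _
        _ ≤ B * (‖KC f (m+2) z u‖ + (m:ℝ) * ‖KC f m z u‖) := by
            apply mul_le_mul hz2 _ (norm_nonneg _) hBpos.le
            calc ‖KC f (m+2) z u + (m:ℂ) * KC f m z u‖
                ≤ ‖KC f (m+2) z u‖ + ‖(m:ℂ) * KC f m z u‖ := norm_add_le _ _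
              _ = ‖KC f (m+2) z u‖ + (m:ℝ) * ‖KC f m z u‖ := by
                  rw [norm_mul, Complex.norm_natCast]
        _ ≤ bnd u := by
            rw [hbnd, mul_add]
            apply add_le_add
            · exact mul_le_mul_of_nonneg_left
                (by simpa [show m+2+1 = m+3 from rfl] using b2) hBpos.le
            · exact mul_le_mul_of_nonneg_left
                (mul_le_mul_of_nonneg_left b0 (Nat.cast_nonneg m)) hBpos.le))
    hbnd_int
    (ae_of_all _ (fun u z hz => hasDerivAt_KC f m u (hmem z hz).1))
  obtain ⟨-, hder⟩ := key
  have hre2 : ∀ k : ℕ, Integrable (fun u : ℝ => KC f k z₀ u) := fun k =>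
    integrable_KC f hf k h0 hre
  have hrw : (∫ u : ℝ, z₀⁻¹ * (KC f (m+2) z₀ u + (m:ℂ) * KC f m z₀ u))
      = z₀⁻¹ * (GC f (m+2) z₀ + (m:ℂ) * GC f m z₀) := by
    rw [MeasureTheory.integral_const_mul]
    congr 1
    rw [MeasureTheory.integral_add (hre2 (m+2)) ((hre2 m).const_mul _),
      MeasureTheory.integral_const_mul]
    rfl
  rw [hrw] at hder
  exact hder

lemma analyticOnNhd_GC (f : ℝ → ℝ) {L : ℝ≥0} (hf : LipschitzWith L f) (m : ℕ) :
    AnalyticOnNhd ℂ (GC f m) {z : ℂ | z ≠ 0 ∧ 0 < ((z^2)⁻¹).re} := by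
  have hopen : IsOpen {z : ℂ | z ≠ 0 ∧ 0 < ((z^2)⁻¹).re} := by
    have h1 : IsOpen {z : ℂ | z ≠ 0} := isOpen_ne
    have hc2 : ContinuousOn (fun z : ℂ => ((z^2)⁻¹).re) {z : ℂ | z ≠ 0} :=
      Complex.continuous_re.comp_continuousOn
        (((continuous_pow 2).continuousOn).inv₀ (fun z hz => pow_ne_zero 2 hz))
    have : {z : ℂ | z ≠ 0 ∧ 0 < ((z^2)⁻¹).re}
        = {z : ℂ | z ≠ 0} ∩ (fun z : ℂ => ((z^2)⁻¹).re) ⁻¹' Set.Ioi 0 := by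
      ext z; simp [Set.mem_setOf_eq]
    rw [this]
    exact hc2.isOpen_inter_preimage h1 isOpen_Ioi
  exact DifferentiableOn.analyticOnNhd
    (fun z hz => (hasDerivAt_GC f hf m hz.1 hz.2).differentiableAt.differentiableWithinAt)
    hopen


/-! ### Back to the real line -/

lemma real_integral_eq (f : ℝ → ℝ) (hfc : Continuous f) (m : ℕ) {σ : ℝ} (hσ : 0 < σ) :
    ∫ u : ℝ, f u * hermiteP m (u/σ) *
        ((Real.sqrt (2*Real.pi))⁻¹ * σ⁻¹ * Real.exp (-(u^2/2) * (σ^2)⁻¹))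
      = ∫ t, f (σ * t) * hermiteP m t ∂(gaussianReal 0 1) := by
  have hγ : gaussianReal 0 1 = volume.withDensity
      (fun x => ((Real.toNNReal (gaussianPDFReal 0 1 x) : ℝ≥0) : ℝ≥0∞)) := by
    rw [gaussianReal_of_var_ne_zero 0 one_ne_zero]; rfl
  have hmeas : Measurable (fun x => Real.toNNReal (gaussianPDFReal 0 1 x)) :=
    measurable_real_toNNReal.comp (measurable_gaussianPDFReal 0 1)
  rw [hγ, integral_withDensity_eq_integral_smul hmeas]
  set g : ℝ → ℝ := fun t => f (σ*t) * hermiteP m t * ((Real.sqrt (2*Real.pi))⁻¹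
      * Real.exp (-(t^2/2))) with hg
  have hpt : ∀ u : ℝ, f u * hermiteP m (u/σ) *
      ((Real.sqrt (2*Real.pi))⁻¹ * σ⁻¹ * Real.exp (-(u^2/2) * (σ^2)⁻¹))
      = σ⁻¹ * g (u/σ) := by
    intro u
    rw [hg]
    simp only
    rw [show σ * (u/σ) = u from by field_simp]
    rw [show -((u/σ)^2/2) = -(u^2/2) * (σ^2)⁻¹ from by rw [div_pow]; ring]
    ring
  simp_rw [hpt]
  rw [MeasureTheory.integral_const_mul, MeasureTheory.Measure.integral_comp_div g σ,
    abs_of_pos hσ, smul_eq_mul, ← mul_assoc, inv_mul_cancel₀ hσ.ne', one_mul]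
  have hpdf : ∀ t : ℝ, gaussianPDFReal 0 1 t
      = (Real.sqrt (2*Real.pi))⁻¹ * Real.exp (-(t^2/2)) := by
    intro t
    rw [gaussianPDFReal]
    norm_num [neg_div]
  congr 1
  funext t
  rw [NNReal.smul_def, Real.coe_toNNReal _ (gaussianPDFReal_nonneg 0 1 t), hpdf t, hg]
  simp only [smul_eq_mul]
  ring

lemma GC_real_eq (f : ℝ → ℝ) {L : ℝ≥0} (hf : LipschitzWith L f) (m : ℕ) {σ : ℝ} (hσ : 0 < σ) :
    GC f m (σ:ℂ) = ((∫ t, f (σ * t) * hermiteP m t ∂(gaussianReal 0 1) : ℝ) : ℂ) := by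
  have h1 : ∀ u : ℝ, KC f m (σ:ℂ) u = (((f u * hermiteP m (u/σ) *
      ((Real.sqrt (2*Real.pi))⁻¹ * σ⁻¹ * Real.exp (-(u^2/2) * (σ^2)⁻¹))) : ℝ) : ℂ) := by
    intro u
    rw [KC]
    rw [show ((u:ℂ)) * ((σ:ℂ))⁻¹ = (((u/σ : ℝ)) : ℂ) from by push_cast; ring]
    rw [HC_ofReal]
    rw [show -((u:ℂ)^2/2) * (((σ:ℂ))^2)⁻¹ = (((-(u^2/2) * (σ^2)⁻¹) : ℝ) : ℂ) from by
      push_cast; ring]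
    rw [← Complex.ofReal_exp]
    push_cast
    ring
  rw [GC]
  simp_rw [h1]
  rw [show ((fun u : ℝ => (((f u * hermiteP m (u/σ) *
        ((Real.sqrt (2*Real.pi))⁻¹ * σ⁻¹ * Real.exp (-(u^2/2) * (σ^2)⁻¹))) : ℝ) : ℂ)))
      = fun u : ℝ => ((RCLike.ofReal : ℝ → ℂ) ((f u * hermiteP m (u/σ) *
        ((Real.sqrt (2*Real.pi))⁻¹ * σ⁻¹ * Real.exp (-(u^2/2) * (σ^2)⁻¹))) : ℝ)) from rfl]
  rw [integral_ofReal, real_integral_eq f hf.continuous m hσ]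
  norm_cast

noncomputable def GR (f : ℝ → ℝ) (m : ℕ) (σ : ℝ) : ℝ := (GC f m (σ:ℂ)).re

lemma mapsTo_S : Set.MapsTo (fun σ : ℝ => (σ:ℂ)) (Set.Ioi 0)
    {z : ℂ | z ≠ 0 ∧ 0 < ((z^2)⁻¹).re} := by
  intro σ hσ
  have hσ0 : (0:ℝ) < σ := hσ
  show (σ:ℂ) ≠ 0 ∧ 0 < ((((σ:ℂ))^2)⁻¹).re
  constructor
  · exact_mod_cast hσ0.ne'
  · have h : (((σ:ℂ))^2)⁻¹ = (((σ^2)⁻¹ : ℝ) : ℂ) := by norm_cast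
    show 0 < (((σ:ℂ))^2)⁻¹.re
    rw [h, Complex.ofReal_re]
    positivity

lemma analyticOnNhd_GR (f : ℝ → ℝ) {L : ℝ≥0} (hf : LipschitzWith L f) (m : ℕ) :
    AnalyticOnNhd ℝ (GR f m) (Set.Ioi 0) := by
  have h1 := (analyticOnNhd_GC f hf m).restrictScalars (𝕜 := ℝ)
  have h2 : AnalyticOnNhd ℝ (fun σ : ℝ => (σ:ℂ)) (Set.Ioi 0) :=
    fun x _ => Complex.ofRealCLM.analyticAt x
  have h3 := h1.comp h2 mapsTo_S
  exact fun x hx => (Complex.reCLM.analyticAt _).comp (h3 x hx)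

lemma hasDerivAt_GR (f : ℝ → ℝ) {L : ℝ≥0} (hf : LipschitzWith L f) (m : ℕ) {σ : ℝ}
    (hσ : 0 < σ) :
    HasDerivAt (GR f m) (σ⁻¹ * (GR f (m+2) σ + (m:ℝ) * GR f m σ)) σ := by
  have hz : ((σ:ℂ)) ≠ 0 := by exact_mod_cast hσ.ne'
  have hre : 0 < ((((σ:ℂ))^2)⁻¹).re := (mapsTo_S hσ).2
  have h := (hasDerivAt_GC f hf m hz hre).real_of_complex
  convert h using 1
  · rfl
  rw [show ((σ:ℂ))⁻¹ = ((σ⁻¹ : ℝ) : ℂ) from by norm_cast, Complex.re_ofReal_mul,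
    Complex.add_re, show ((m:ℂ)) = (((m:ℝ)) : ℂ) from by norm_cast, Complex.re_ofReal_mul]
  rfl

end StmtTwoAux

theorem stmt_2 (f : ℝ → ℝ) (hf : ∃ L, LipschitzWith L f)
    (Ψ : ℕ → ℝ → ℝ)
    (hΨ : ∀ (r : ℕ) (σ : ℝ),
      Ψ r σ = (σ ^ r)⁻¹ * ∫ t, f (σ * t) * hermiteP r t ∂(gaussianReal 0 1)) :
    ∀ r : ℕ, ContDiffOn ℝ (⊤ : ℕ∞) (Ψ r) (Set.Ioi 0) ∧
      ∀ σ : ℝ, 0 < σ → deriv (Ψ r) σ = σ * Ψ (r + 2) σ := by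
  obtain ⟨L, hf⟩ := hf
  have hψeq : ∀ (m : ℕ) (σ : ℝ), 0 < σ → Ψ m σ = (σ^m)⁻¹ * StmtTwoAux.GR f m σ := by
    intro m σ hσ
    rw [hΨ, StmtTwoAux.GR, StmtTwoAux.GC_real_eq f hf m hσ, Complex.ofReal_re]
  intro r
  constructor
  · have hA : AnalyticOnNhd ℝ (fun σ : ℝ => (σ^r)⁻¹ * StmtTwoAux.GR f r σ) (Set.Ioi 0) := by
      apply AnalyticOnNhd.mul
      · exact (analyticOnNhd_id.pow r).inv (fun σ hσ => pow_ne_zero r (ne_of_gt hσ))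
      · exact StmtTwoAux.analyticOnNhd_GR f hf r
    exact (hA.contDiffOn isOpen_Ioi.uniqueDiffOn).congr (fun σ hσ => hψeq r σ hσ)
  · intro σ hσ
    have h1 : HasDerivAt (fun σ : ℝ => (σ^r)⁻¹) (-((r:ℝ) * σ^(r-1)) / (σ^r)^2) σ :=
      (hasDerivAt_pow r σ).inv (pow_ne_zero r hσ.ne')
    have h2 := StmtTwoAux.hasDerivAt_GR f hf r hσ
    have h3 := h1.mul h2
    have hval : -((r:ℝ) * σ^(r-1)) / (σ^r)^2 * StmtTwoAux.GR f r σ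
        + (σ^r)⁻¹ * (σ⁻¹ * (StmtTwoAux.GR f (r+2) σ + (r:ℝ) * StmtTwoAux.GR f r σ))
        = σ * Ψ (r+2) σ := by
      rw [hψeq (r+2) σ hσ]
      rcases r with _ | r
      · norm_num
        field_simp
      · simp only [Nat.add_sub_cancel]
        field_simp
        ring
    have hEq : Ψ r =ᶠ[nhds σ] fun σ => (σ^r)⁻¹ * StmtTwoAux.GR f r σ := by
      filter_upwards [Ioi_mem_nhds hσ] with x hx using hψeq r x hx
    rw [Filter.EventuallyEq.deriv_eq hEq, ← hval]
    exact h3.deriv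
end

section
/- Let f : ℝ → ℝ be Lipschitz continuous and for σ > 0 let f_σ(t) = f(σt). For every r ∈ ℕ there exist δ > 0 and C > 0 such that for all σ > 0 with |σ − 1| ≤ δ one has |ζ_r(f_σ) − σ^r·(ζ_r(f) + √((r+1)(r+2))·(σ−1)·ζ_{r+2}(f))| ≤ C·(σ−1)². In particular there exists C' > 0 with |ζ_r(f_σ) − σ^r·ζ_r(f)| ≤ C'·|σ−1| for all σ with |σ − 1| ≤ δ. -/
open MeasureTheory ProbabilityTheory Filter
open scoped NNReal

/-- The `r`-th Hermite coefficient `ζ_r(f) = ∫ f·ĥ_r dγ` of `f` w.r.t. the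
standard Gaussian measure. -/
noncomputable def zeta (f : ℝ → ℝ) (r : ℕ) : ℝ :=
  ∫ t, f t * hermiteN r t ∂(gaussianReal 0 1)

/-!
Substituting `s = σ t`, `ζ_r(f_σ) = c_r σ^r ∫ f(s) K(s, σ) ds` with the kernel
`K(s, σ) = σ^{-(r+1)} h_r(s/σ) e^{-(s/σ)²/2}` and `c_r = (√(r!) √(2π))⁻¹`.
Differentiating `σ^{-k} p(s/σ) e^{-(s/σ)²/2}` in `σ` gives `σ^{-(k+1)} q(s/σ) e^{-(s/σ)²/2}` with
`q = X²p - Xp' - kp`, and for `p = h_r`, `k = r + 1` the recursion of the Hermite polynomials gives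
`q = h_{r+2}`; since `√((r+2)!) = √((r+1)(r+2)) √(r!)`, the first-order term at `σ = 1` is
`√((r+1)(r+2)) (σ - 1) ζ_{r+2}(f)`. For `σ ∈ [1/2, 3/2]` all these kernels are bounded by a
multiple of `e^{-s²/9}`, so the second-order Taylor remainder of `K` integrates against `f`,
which grows at most linearly, to `O((σ - 1)²)`.
-/

open Polynomial

theorem abs_pow_le_mul_exp_sq (v : ℝ) (n : ℕ) :
    |v| ^ n ≤ n.factorial * Real.exp 1 * Real.exp (v ^ 2 / 4) := by
  have hfac : |v| ^ n / n.factorial ≤ Real.exp |v| :=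
    Real.pow_div_factorial_le_exp _ (abs_nonneg v) n
  have habs : |v| ≤ 1 + v ^ 2 / 4 := by nlinarith [sq_nonneg (|v| - 2), sq_abs v]
  rw [div_le_iff₀ (by positivity)] at hfac
  calc |v| ^ n ≤ n.factorial * Real.exp |v| := by linarith
    _ ≤ n.factorial * Real.exp (1 + v ^ 2 / 4) := by gcongr
    _ = n.factorial * Real.exp 1 * Real.exp (v ^ 2 / 4) := by rw [Real.exp_add, mul_assoc]

theorem hasDerivAt_inv_pow (k : ℕ) {σ : ℝ} (hσ : σ ≠ 0) :
    HasDerivAt (fun x : ℝ => x⁻¹ ^ k) (-k * σ⁻¹ ^ (k + 1)) σ := by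
  refine ((hasDerivAt_pow k σ⁻¹).comp σ (hasDerivAt_inv hσ)).congr_deriv ?_
  rcases k with _ | k
  · simp
  · push_cast
    simp only [inv_pow]
    field_simp
    ring

theorem Convex.abs_sub_sub_deriv_mul_le {s : Set ℝ} (hs : Convex ℝ s) {g g' g'' : ℝ → ℝ}
    {M a x : ℝ} (ha : a ∈ s) (hx : x ∈ s) (hg : ∀ y ∈ s, HasDerivAt g (g' y) y)
    (hg' : ∀ y ∈ s, HasDerivAt g' (g'' y) y) (hM : ∀ y ∈ s, |g'' y| ≤ M) :
    |g x - g a - g' a * (x - a)| ≤ M * (x - a) ^ 2 := by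
  have hM0 : 0 ≤ M := (abs_nonneg _).trans (hM a ha)
  have hseg : segment ℝ a x ⊆ s := hs.segment_subset ha hx
  have hg'_lip : ∀ y ∈ segment ℝ a x, ‖g' y - g' a‖ ≤ M * |x - a| := by
    intro y hy
    have := hs.norm_image_sub_le_of_norm_hasDerivWithin_le
      (fun z hz => (hg' z hz).hasDerivWithinAt) hM ha (hseg hy)
    rw [segment_eq_uIcc] at hy
    exact this.trans (mul_le_mul_of_nonneg_left (Set.abs_sub_left_of_mem_uIcc hy) hM0)
  have hlin := (convex_segment a x).norm_image_sub_le_of_norm_hasDerivWithin_le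
    (f := fun y => g y - g' a * y)
    (fun y hy => (((hg y (hseg hy)).sub ((hasDerivAt_id y).const_mul (g' a))).congr_deriv
      (by simp)).hasDerivWithinAt) hg'_lip (left_mem_segment ℝ a x) (right_mem_segment ℝ a x)
  calc |g x - g a - g' a * (x - a)| = ‖(g x - g' a * x) - (g a - g' a * a)‖ := by
        rw [Real.norm_eq_abs]
        ring_nf
    _ ≤ M * |x - a| * ‖x - a‖ := hlin
    _ = M * (x - a) ^ 2 := by rw [Real.norm_eq_abs, mul_assoc, abs_mul_abs_self, sq]

theorem integrable_mul_of_abs_le_mul_exp {f g : ℝ → ℝ} (hf : AEStronglyMeasurable f)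
    (hfw : Integrable fun s => f s * Real.exp (-(s ^ 2) / 9)) (hg : Continuous g) {M : ℝ}
    (hgM : ∀ s, |g s| ≤ M * Real.exp (-(s ^ 2) / 9)) : Integrable fun s => f s * g s := by
  refine (hfw.norm.const_mul M).mono' (hf.mul hg.aestronglyMeasurable) (ae_of_all _ fun s => ?_)
  rw [Real.norm_eq_abs, Real.norm_eq_abs, abs_mul, abs_mul, Real.abs_exp]
  calc |f s| * |g s| ≤ |f s| * (M * Real.exp (-(s ^ 2) / 9)) := by gcongr; exact hgM s
    _ = M * (|f s| * Real.exp (-(s ^ 2) / 9)) := by ring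

theorem LipschitzWith.integrable_mul_exp_neg_mul_sq {f : ℝ → ℝ} {L : ℝ≥0}
    (hf : LipschitzWith L f) {b : ℝ} (hb : 0 < b) :
    Integrable fun s => f s * Real.exp (-b * s ^ 2) := by
  have hdom : Integrable fun s => (|f 0| + L * |s|) * Real.exp (-b * s ^ 2) := by
    refine (((_root_.integrable_exp_neg_mul_sq hb).const_mul |f 0|).add
      ((_root_.integrable_mul_exp_neg_mul_sq hb).norm.const_mul L)).congr (ae_of_all _ fun s => ?_)
    simp only [Pi.add_apply, norm_mul, Real.norm_eq_abs, Real.abs_exp]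
    ring
  refine hdom.mono' (hf.continuous.mul (by fun_prop)).aestronglyMeasurable
    (ae_of_all _ fun s => ?_)
  have hgrowth : |f s| ≤ |f 0| + L * |s| := by
    have := hf.dist_le_mul s 0
    rw [Real.dist_eq, Real.dist_eq, sub_zero] at this
    linarith [abs_sub_abs_le_abs_sub (f s) (f 0)]
  rw [norm_mul, Real.norm_eq_abs, Real.norm_eq_abs, Real.abs_exp]
  gcongr

theorem sqrt_factorial_add_two (r : ℕ) : √((r + 2).factorial : ℝ) =
    √(((r : ℝ) + 1) * ((r : ℝ) + 2)) * √(r.factorial : ℝ) := by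
  rw [← Real.sqrt_mul (by positivity), Nat.factorial_succ, Nat.factorial_succ]
  push_cast
  congr 1
  ring

namespace Polynomial

theorem derivative_hermite_succ (n : ℕ) :
    derivative (hermite (n + 1)) = ((n : ℤ[X]) + 1) * hermite n := by
  induction n with
  | zero => simp
  | succ n ih =>
    rw [hermite_succ (n + 1), derivative_sub, derivative_mul, derivative_X, ih, derivative_mul,
      derivative_add, derivative_natCast, derivative_one, hermite_succ n]
    push_cast
    ring

end Polynomial

theorem hermiteP_eq_aeval (r : ℕ) (t : ℝ) : hermiteP r t = aeval t (hermite r) := by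
  induction r generalizing t with
  | zero => simp [hermiteP]
  | succ n ih =>
    simp only [hermiteP, funext ih, Polynomial.deriv_aeval, hermite_succ, map_sub, map_mul,
      aeval_X]

noncomputable def gaussMul (p : ℤ[X]) (v : ℝ) : ℝ := aeval v p * Real.exp (-(v ^ 2) / 2)

noncomputable def dilationKernel (p : ℤ[X]) (k : ℕ) (s σ : ℝ) : ℝ := σ⁻¹ ^ k * gaussMul p (s / σ)

noncomputable def dilationDeriv (k : ℕ) (p : ℤ[X]) : ℤ[X] :=
  X ^ 2 * p - X * derivative p - (k : ℤ[X]) * p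

theorem dilationDeriv_hermite (r : ℕ) : dilationDeriv (r + 1) (hermite r) = hermite (r + 2) := by
  rw [dilationDeriv, hermite_succ (r + 1), derivative_hermite_succ, hermite_succ r]
  push_cast
  ring

theorem dilationKernel_one (p : ℤ[X]) (k : ℕ) (s : ℝ) : dilationKernel p k s 1 = gaussMul p s := by
  simp [dilationKernel]

theorem continuous_dilationKernel (p : ℤ[X]) (k : ℕ) (σ : ℝ) :
    Continuous fun s => dilationKernel p k s σ := by
  unfold dilationKernel gaussMul
  fun_prop

theorem hasDerivAt_gaussMul (p : ℤ[X]) (v : ℝ) :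
    HasDerivAt (gaussMul p) (gaussMul (derivative p - X * p) v) v := by
  have hexp : HasDerivAt (fun v : ℝ => Real.exp (-(v ^ 2) / 2)) (Real.exp (-(v ^ 2) / 2) * -v) v :=
    ((hasDerivAt_pow 2 v).neg.div_const 2).exp.congr_deriv (by simp only [Pi.neg_apply]; ring)
  refine ((Polynomial.hasDerivAt_aeval p v).mul hexp).congr_deriv ?_
  simp only [gaussMul, map_sub, map_mul, aeval_X]
  ring

theorem hasDerivAt_dilationKernel (p : ℤ[X]) (k : ℕ) (s : ℝ) {σ : ℝ} (hσ : σ ≠ 0) :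
    HasDerivAt (dilationKernel p k s) (dilationKernel (dilationDeriv k p) (k + 1) s σ) σ := by
  have hquot : HasDerivAt (fun x => s / x) (-(s / σ ^ 2)) σ := by
    simpa [div_eq_mul_inv] using (hasDerivAt_inv hσ).const_mul s
  refine ((hasDerivAt_inv_pow k hσ).mul
    ((hasDerivAt_gaussMul p (s / σ)).comp σ hquot)).congr_deriv ?_
  simp only [dilationKernel, dilationDeriv, gaussMul, map_sub, map_mul, aeval_X, map_pow,
    map_natCast, Function.comp, inv_pow]
  field_simp
  ring

theorem exists_abs_aeval_le_mul_exp (p : ℤ[X]) :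
    ∃ M ≥ 0, ∀ v : ℝ, |aeval v p| ≤ M * Real.exp (v ^ 2 / 4) := by
  induction p using Polynomial.induction_on' with
  | add p q hp hq =>
    obtain ⟨M, hM0, hM⟩ := hp
    obtain ⟨N, hN0, hN⟩ := hq
    refine ⟨M + N, by positivity, fun v => ?_⟩
    rw [map_add, add_mul]
    exact (abs_add_le _ _).trans (add_le_add (hM v) (hN v))
  | monomial n a =>
    refine ⟨|(a : ℝ)| * (n.factorial * Real.exp 1), by positivity, fun v => ?_⟩
    rw [aeval_monomial, abs_mul, abs_pow, mul_assoc, algebraMap_int_eq, eq_intCast]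
    exact mul_le_mul_of_nonneg_left (abs_pow_le_mul_exp_sq v n) (abs_nonneg _)

theorem exists_abs_gaussMul_le (p : ℤ[X]) :
    ∃ M ≥ 0, ∀ v, |gaussMul p v| ≤ M * Real.exp (-(v ^ 2) / 4) := by
  obtain ⟨M, hM0, hM⟩ := exists_abs_aeval_le_mul_exp p
  refine ⟨M, hM0, fun v => ?_⟩
  rw [gaussMul, abs_mul, Real.abs_exp]
  calc |aeval v p| * Real.exp (-(v ^ 2) / 2)
      ≤ M * Real.exp (v ^ 2 / 4) * Real.exp (-(v ^ 2) / 2) := by gcongr; exact hM v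
    _ = M * Real.exp (-(v ^ 2) / 4) := by rw [mul_assoc, ← Real.exp_add]; ring_nf

theorem exists_abs_dilationKernel_le (p : ℤ[X]) (k : ℕ) :
    ∃ M ≥ 0, ∀ s, ∀ σ ∈ Set.Icc (1 / 2 : ℝ) (3 / 2),
      |dilationKernel p k s σ| ≤ M * Real.exp (-(s ^ 2) / 9) := by
  obtain ⟨M, hM0, hM⟩ := exists_abs_gaussMul_le p
  refine ⟨2 ^ k * M, by positivity, fun s σ hσ => ?_⟩
  have hσ0 : 0 < σ := by linarith [hσ.1]
  have hinv : |σ⁻¹ ^ k| ≤ 2 ^ k := by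
    rw [abs_pow, abs_inv, abs_of_pos hσ0]
    gcongr
    rw [inv_le_comm₀ hσ0 two_pos]
    linarith [hσ.1]
  have hdecay : Real.exp (-((s / σ) ^ 2) / 4) ≤ Real.exp (-(s ^ 2) / 9) := by
    have hsq : s ^ 2 * (4 / 9) ≤ (s / σ) ^ 2 := by
      rw [div_pow, le_div_iff₀ (by positivity)]
      have : σ ^ 2 ≤ 9 / 4 := by nlinarith [hσ.2]
      nlinarith [sq_nonneg s]
    rw [Real.exp_le_exp]
    linarith
  rw [dilationKernel, abs_mul, mul_assoc]
  exact mul_le_mul hinv ((hM _).trans (by gcongr)) (abs_nonneg _) (by positivity)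

theorem exists_abs_dilationKernel_taylor_le (p : ℤ[X]) (k : ℕ) :
    ∃ M ≥ 0, ∀ s, ∀ σ ∈ Set.Icc (1 / 2 : ℝ) (3 / 2),
      |dilationKernel p k s σ - gaussMul p s - gaussMul (dilationDeriv k p) s * (σ - 1)|
        ≤ M * Real.exp (-(s ^ 2) / 9) * (σ - 1) ^ 2 := by
  obtain ⟨M, hM0, hM⟩ :=
    exists_abs_dilationKernel_le (dilationDeriv (k + 1) (dilationDeriv k p)) (k + 1 + 1)
  refine ⟨M, hM0, fun s σ hσ => ?_⟩
  have hne : ∀ y ∈ Set.Icc (1 / 2 : ℝ) (3 / 2), y ≠ 0 := fun y hy => by linarith [hy.1]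
  simpa only [dilationKernel_one] using (convex_Icc _ _).abs_sub_sub_deriv_mul_le
    (show (1 : ℝ) ∈ Set.Icc (1 / 2 : ℝ) (3 / 2) by norm_num) hσ
    (fun y hy => hasDerivAt_dilationKernel _ _ _ (hne y hy))
    (fun y hy => hasDerivAt_dilationKernel _ _ _ (hne y hy)) (fun y hy => hM s y hy)

theorem integrable_mul_dilationKernel {f : ℝ → ℝ} (hf : AEStronglyMeasurable f)
    (hfw : Integrable fun s => f s * Real.exp (-(s ^ 2) / 9)) (p : ℤ[X]) (k : ℕ) {σ : ℝ}
    (hσ : σ ∈ Set.Icc (1 / 2 : ℝ) (3 / 2)) : Integrable fun s => f s * dilationKernel p k s σ :=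
  have ⟨_, _, hM⟩ := exists_abs_dilationKernel_le p k
  integrable_mul_of_abs_le_mul_exp hf hfw (continuous_dilationKernel p k σ) (hM · σ hσ)

theorem exists_abs_integral_dilationKernel_taylor_le {f : ℝ → ℝ} (hf : AEStronglyMeasurable f)
    (hfw : Integrable fun s => f s * Real.exp (-(s ^ 2) / 9)) (p : ℤ[X]) (k : ℕ) :
    ∃ C ≥ 0, ∀ σ ∈ Set.Icc (1 / 2 : ℝ) (3 / 2),
      |(∫ s, f s * dilationKernel p k s σ) - (∫ s, f s * gaussMul p s)
          - (σ - 1) * ∫ s, f s * gaussMul (dilationDeriv k p) s| ≤ C * (σ - 1) ^ 2 := by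
  obtain ⟨M, hM0, hM⟩ := exists_abs_dilationKernel_taylor_le p k
  have h1 : (1 : ℝ) ∈ Set.Icc (1 / 2 : ℝ) (3 / 2) := by norm_num
  have hG : ∀ q, Integrable fun s => f s * gaussMul q s := fun q => by
    simpa only [dilationKernel_one] using integrable_mul_dilationKernel hf hfw q 0 h1
  refine ⟨M * ∫ s, ‖f s * Real.exp (-(s ^ 2) / 9)‖, by positivity, fun σ hσ => ?_⟩
  have hsplit : (∫ s, f s * dilationKernel p k s σ) - (∫ s, f s * gaussMul p s)
      - (σ - 1) * ∫ s, f s * gaussMul (dilationDeriv k p) s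
      = ∫ s, f s * (dilationKernel p k s σ - gaussMul p s
          - gaussMul (dilationDeriv k p) s * (σ - 1)) := by
    have hfun : (fun s => f s * (dilationKernel p k s σ - gaussMul p s
        - gaussMul (dilationDeriv k p) s * (σ - 1))) = fun s => (f s * dilationKernel p k s σ
        - f s * gaussMul p s) - f s * gaussMul (dilationDeriv k p) s * (σ - 1) := by
      ext s; ring
    have hK := integrable_mul_dilationKernel hf hfw p k hσ
    rw [hfun, integral_sub _ ((hG _).mul_const _), integral_sub hK (hG p), integral_mul_const]
    · ring
    · exact hK.sub (hG p)
  rw [hsplit, ← Real.norm_eq_abs, ← integral_const_mul, ← integral_mul_const]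
  refine norm_integral_le_of_norm_le ((hfw.norm.const_mul M).mul_const _)
    (ae_of_all _ fun s => ?_)
  rw [norm_mul, norm_mul, Real.norm_eq_abs, Real.norm_eq_abs (Real.exp _), Real.abs_exp]
  calc ‖f s‖ * |dilationKernel p k s σ - gaussMul p s - gaussMul (dilationDeriv k p) s * (σ - 1)|
      ≤ ‖f s‖ * (M * Real.exp (-(s ^ 2) / 9) * (σ - 1) ^ 2) := by gcongr; exact hM s σ hσ
    _ = M * (‖f s‖ * Real.exp (-(s ^ 2) / 9)) * (σ - 1) ^ 2 := by ring

theorem zeta_eq_integral_gaussMul (g : ℝ → ℝ) (r : ℕ) :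
    zeta g r = (√(r.factorial : ℝ) * √(2 * Real.pi))⁻¹ * ∫ t, g t * gaussMul (hermite r) t := by
  rw [zeta, integral_gaussianReal_eq_integral_smul one_ne_zero, ← integral_const_mul]
  congr 1
  ext t
  simp only [gaussianPDFReal, hermiteN, hermiteP_eq_aeval, gaussMul, smul_eq_mul,
    NNReal.coe_one, mul_one, sub_zero]
  ring

theorem zeta_comp_mul (f : ℝ → ℝ) (r : ℕ) {σ : ℝ} (hσ : 0 < σ) :
    zeta (fun t => f (σ * t)) r = σ ^ r * ((√(r.factorial : ℝ) * √(2 * Real.pi))⁻¹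
      * ∫ s, f s * dilationKernel (hermite r) (r + 1) s σ) := by
  have hsub : ∫ t, f (σ * t) * gaussMul (hermite r) t
      = σ⁻¹ * ∫ s, f s * gaussMul (hermite r) (s / σ) := by
    simpa [hσ.ne', abs_of_pos hσ, mul_div_cancel_left₀] using
      Measure.integral_comp_mul_left (fun s => f s * gaussMul (hermite r) (s / σ)) σ
  rw [zeta_eq_integral_gaussMul, hsub]
  simp only [dilationKernel, ← integral_const_mul]
  congr 1
  ext s
  rw [inv_pow, pow_succ]
  field_simp

theorem exists_abs_zeta_comp_mul_sub_le {f : ℝ → ℝ} (hf : AEStronglyMeasurable f)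
    (hfw : Integrable fun s => f s * Real.exp (-(s ^ 2) / 9)) (r : ℕ) :
    ∃ C > 0, ∀ σ : ℝ, 0 < σ → |σ - 1| ≤ 1 / 2 →
      |zeta (fun t => f (σ * t)) r - σ ^ r * (zeta f r +
          √(((r : ℝ) + 1) * ((r : ℝ) + 2)) * (σ - 1) * zeta f (r + 2))| ≤ C * (σ - 1) ^ 2 := by
  obtain ⟨C, hC0, hC⟩ := exists_abs_integral_dilationKernel_taylor_le hf hfw (hermite r) (r + 1)
  rw [dilationDeriv_hermite] at hC
  set c := (√(r.factorial : ℝ) * √(2 * Real.pi))⁻¹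
  have hc : 0 < c := by positivity
  refine ⟨2 ^ r * c * C + 1, by positivity, fun σ hσ hσ1 => ?_⟩
  have hIcc : σ ∈ Set.Icc (1 / 2 : ℝ) (3 / 2) := by constructor <;> linarith [abs_le.mp hσ1]
  have hζ2 : √(((r : ℝ) + 1) * ((r : ℝ) + 2)) * zeta f (r + 2)
      = c * ∫ s, f s * gaussMul (hermite (r + 2)) s := by
    rw [zeta_eq_integral_gaussMul, sqrt_factorial_add_two]
    simp only [c]
    field_simp
  have hσr : σ ^ r ≤ 2 ^ r := pow_le_pow_left₀ hσ.le (by linarith [hIcc.2]) r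
  rw [zeta_comp_mul f r hσ, zeta_eq_integral_gaussMul f r]
  calc _ = |σ ^ r * c * ((∫ s, f s * dilationKernel (hermite r) (r + 1) s σ)
          - (∫ s, f s * gaussMul (hermite r) s)
          - (σ - 1) * ∫ s, f s * gaussMul (hermite (r + 2)) s)| := by
        congr 1
        linear_combination (-(σ ^ r) * (σ - 1)) * hζ2
    _ ≤ 2 ^ r * c * (C * (σ - 1) ^ 2) := by
        rw [abs_mul, abs_mul, abs_of_pos hc, abs_of_pos (pow_pos hσ r)]
        gcongr
        exact hC σ hIcc
    _ ≤ (2 ^ r * c * C + 1) * (σ - 1) ^ 2 := by nlinarith [sq_nonneg (σ - 1)]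

theorem stmt_3 (f : ℝ → ℝ) (hf : ∃ L, LipschitzWith L f) (r : ℕ) :
    ∃ δ > (0:ℝ), ∃ C > (0:ℝ),
      (∀ σ : ℝ, 0 < σ → |σ - 1| ≤ δ →
        |zeta (fun t => f (σ * t)) r -
            σ ^ r * (zeta f r +
              Real.sqrt (((r:ℝ) + 1) * ((r:ℝ) + 2)) * (σ - 1) * zeta f (r + 2))|
          ≤ C * (σ - 1) ^ 2) ∧
      ∃ C' > (0:ℝ), ∀ σ : ℝ, 0 < σ → |σ - 1| ≤ δ →
        |zeta (fun t => f (σ * t)) r - σ ^ r * zeta f r| ≤ C' * |σ - 1| := by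
  obtain ⟨L, hL⟩ := hf
  have hfw : Integrable fun s => f s * Real.exp (-(s ^ 2) / 9) :=
    (hL.integrable_mul_exp_neg_mul_sq (b := 1 / 9) (by norm_num)).congr
      (ae_of_all _ fun s => by ring_nf)
  obtain ⟨C, hC, hsecond⟩ :=
    exists_abs_zeta_comp_mul_sub_le hL.continuous.aestronglyMeasurable hfw r
  set d := √(((r : ℝ) + 1) * ((r : ℝ) + 2)) * zeta f (r + 2) with hd
  refine ⟨1 / 2, by norm_num, C, hC, hsecond, C + 2 ^ r * |d|, by positivity,
    fun σ hσ hσ1 => ?_⟩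
  have hσr : |σ ^ r| ≤ 2 ^ r := by
    rw [abs_of_pos (pow_pos hσ r)]
    exact pow_le_pow_left₀ hσ.le (by linarith [abs_le.mp hσ1]) r
  have hsq : (σ - 1) ^ 2 ≤ |σ - 1| := by
    rw [← sq_abs]
    nlinarith [abs_nonneg (σ - 1)]
  calc _ = |(zeta (fun t => f (σ * t)) r - σ ^ r * (zeta f r +
            √(((r : ℝ) + 1) * ((r : ℝ) + 2)) * (σ - 1) * zeta f (r + 2)))
          + σ ^ r * d * (σ - 1)| := by
        rw [hd]
        ring_nf
    _ ≤ C * (σ - 1) ^ 2 + 2 ^ r * |d| * |σ - 1| := by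
        refine (abs_add_le _ _).trans (add_le_add (hsecond σ hσ hσ1) ?_)
        rw [abs_mul, abs_mul]
        gcongr
    _ ≤ (C + 2 ^ r * |d|) * |σ - 1| := by nlinarith
end

section
/- Let Δ be a real symmetric n×n matrix such that I_n + Δ is positive semidefinite. Then for every integer r ≥ 1, ‖Δ^{∘(r+1)}‖ ≤ (1 + ‖Δ‖_max)·‖Δ^{∘r}‖ + ‖Δ‖_max^r. -/
open MeasureTheory ProbabilityTheory Filter
open scoped NNReal

/-- Spectral (operator) norm of a real matrix. -/
noncomputable def specNorm {m p : Type*} [Fintype m] [Fintype p] [DecidableEq p]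
    (M : Matrix m p ℝ) : ℝ :=
  ‖(Matrix.toEuclideanLin M).toContinuousLinearMap‖

/-- Entrywise maximum norm of a matrix. -/
noncomputable def maxNorm {m p : Type*} [Fintype m] [Fintype p] (M : Matrix m p ℝ) : ℝ :=
  ⨆ i, ⨆ j, |M i j|

/-- `r`-fold Hadamard (entrywise) power of a matrix. -/
def hadPow {m : Type*} (M : Matrix m m ℝ) (r : ℕ) : Matrix m m ℝ :=
  Matrix.of fun i j => M i j ^ r

/-!
Since `Δ^{∘(r+1)} = Δ ∘ Δ^{∘r} = (I + Δ) ∘ Δ^{∘r} - I ∘ Δ^{∘r}` and `I ∘ Δ^{∘r}` is the diagonal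
matrix of the `Δᵢᵢ ^ r`, everything follows from Schur's bound `‖A ∘ B‖ ≤ (maxᵢ Aᵢᵢ) ‖B‖` for
positive semidefinite `A`. Writing `A = Cᴴ C` gives `A ∘ B = ∑ₖ Dₖᴴ B Dₖ` with `Dₖ` the diagonal
matrix of the `k`-th row of `C`, and `A ∘ I = ∑ₖ Dₖᴴ Dₖ`; the bound is then an instance of
`‖∑ₖ Dₖ⋆ B Dₖ‖ ≤ ‖∑ₖ Dₖ⋆ Dₖ‖ ‖B‖` for Hilbert space operators, which follows from Cauchy–Schwarz.
-/

namespace ContinuousLinearMap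

variable {𝕜 E : Type*} [RCLike 𝕜] [NormedAddCommGroup E] [InnerProductSpace 𝕜 E] [CompleteSpace E]

theorem norm_sum_star_mul_mul_le {ι : Type*} (s : Finset ι) (D : ι → E →L[𝕜] E)
    (B : E →L[𝕜] E) :
    ‖∑ k ∈ s, star (D k) * B * D k‖ ≤ ‖∑ k ∈ s, star (D k) * D k‖ * ‖B‖ := by
  set P := ∑ k ∈ s, star (D k) * D k
  have hP : ∀ z : E, ‖z‖ = 1 → ∑ k ∈ s, ‖D k z‖ ^ 2 ≤ ‖P‖ := fun z hz => by
    calc ∑ k ∈ s, ‖D k z‖ ^ 2 = RCLike.re (inner 𝕜 (P z) z) := by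
          simp [P, sum_inner, star_eq_adjoint, adjoint_inner_left]
      _ ≤ ‖P z‖ * ‖z‖ := re_inner_le_norm _ _
      _ ≤ ‖P‖ := by simpa [hz] using P.le_opNorm z
  refine opNorm_le_of_re_inner_le (by positivity) fun x y hx hy => ?_
  calc RCLike.re (inner 𝕜 ((∑ k ∈ s, star (D k) * B * D k) x) y)
      = ∑ k ∈ s, RCLike.re (inner 𝕜 (B (D k x)) (D k y)) := by
        simp [sum_inner, star_eq_adjoint, adjoint_inner_left]
    _ ≤ ∑ k ∈ s, ‖B‖ * ((‖D k x‖ ^ 2 + ‖D k y‖ ^ 2) / 2) := by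
        refine Finset.sum_le_sum fun k _ => ?_
        calc RCLike.re (inner 𝕜 (B (D k x)) (D k y)) ≤ ‖B (D k x)‖ * ‖D k y‖ :=
              re_inner_le_norm _ _
          _ ≤ ‖B‖ * (‖D k x‖ * ‖D k y‖) := by
              rw [← mul_assoc]; gcongr; exact B.le_opNorm _
          _ ≤ ‖B‖ * ((‖D k x‖ ^ 2 + ‖D k y‖ ^ 2) / 2) := by
              gcongr; nlinarith [sq_nonneg (‖D k x‖ - ‖D k y‖)]
    _ = ‖B‖ * ((∑ k ∈ s, ‖D k x‖ ^ 2 + ∑ k ∈ s, ‖D k y‖ ^ 2) / 2) := by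
        rw [← Finset.mul_sum, ← Finset.sum_add_distrib, Finset.sum_div]
    _ ≤ ‖B‖ * ((‖P‖ + ‖P‖) / 2) := by gcongr; exacts [hP x hx, hP y hy]
    _ = ‖P‖ * ‖B‖ := by ring

end ContinuousLinearMap

namespace Matrix

open scoped Matrix.Norms.L2Operator MatrixOrder ComplexOrder

variable {ι : Type*} [Fintype ι] [DecidableEq ι]

theorem conjTranspose_mul_self_hadamard {κ R : Type*} [Fintype κ] [CommRing R] [StarRing R]
    (C : Matrix κ ι R) (B : Matrix ι ι R) :
    (Cᴴ * C) ⊙ B = ∑ k, (diagonal (C k))ᴴ * B * diagonal (C k) := by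
  ext i j
  simp only [hadamard_apply, sum_apply, mul_diagonal, diagonal_conjTranspose, diagonal_mul]
  simp only [mul_apply, conjTranspose_apply, Pi.star_apply, Finset.sum_mul]
  exact Finset.sum_congr rfl fun k _ => mul_right_comm _ _ _

variable {𝕜 : Type*} [RCLike 𝕜]

theorem l2_opNorm_sum_conjTranspose_mul_mul_le {κ : Type*} [Fintype κ]
    (D : κ → Matrix ι ι 𝕜) (B : Matrix ι ι 𝕜) :
    ‖∑ k, (D k)ᴴ * B * D k‖ ≤ ‖∑ k, (D k)ᴴ * D k‖ * ‖B‖ := by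
  have h := ContinuousLinearMap.norm_sum_star_mul_mul_le Finset.univ
    (fun k => toEuclideanCLM (n := ι) (𝕜 := 𝕜) (D k)) (toEuclideanCLM (n := ι) (𝕜 := 𝕜) B)
  simp only [← map_star, ← map_mul, ← map_sum] at h
  simpa only [cstar_norm_def, star_eq_conjTranspose] using h

theorem PosSemidef.l2_opNorm_hadamard_le {A : Matrix ι ι 𝕜} (hA : A.PosSemidef)
    (B : Matrix ι ι 𝕜) : ‖A ⊙ B‖ ≤ ‖A.diag‖ * ‖B‖ := by
  obtain ⟨C, rfl⟩ := CStarAlgebra.nonneg_iff_eq_star_mul_self.mp hA.nonneg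
  rw [← l2_opNorm_diagonal, ← hadamard_one, star_eq_conjTranspose,
    conjTranspose_mul_self_hadamard, conjTranspose_mul_self_hadamard]
  simpa only [mul_one] using l2_opNorm_sum_conjTranspose_mul_mul_le (fun k => diagonal (C k)) B

end Matrix

open scoped Matrix Matrix.Norms.L2Operator

theorem hadPow_succ {m : Type*} (M : Matrix m m ℝ) (r : ℕ) :
    hadPow M (r + 1) = M ⊙ hadPow M r := by
  ext i j
  simp [hadPow, pow_succ']

section EntrywiseBounds

variable {m : Type*} [Fintype m]

theorem abs_le_maxNorm {p : Type*} [Fintype p] (M : Matrix m p ℝ) (i : m) (j : p) :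
    |M i j| ≤ maxNorm M :=
  (le_ciSup (Set.finite_range _).bddAbove j).trans
    (le_ciSup (f := fun i => ⨆ j, |M i j|) (Set.finite_range _).bddAbove i)

theorem maxNorm_nonneg {p : Type*} [Fintype p] (M : Matrix m p ℝ) : 0 ≤ maxNorm M :=
  Real.iSup_nonneg fun _ => Real.iSup_nonneg fun _ => abs_nonneg _

theorem norm_diag_hadPow_le (M : Matrix m m ℝ) (r : ℕ) :
    ‖(hadPow M r).diag‖ ≤ maxNorm M ^ r :=
  (pi_norm_le_iff_of_nonneg (pow_nonneg (maxNorm_nonneg M) r)).2 fun i => by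
    simpa [hadPow, abs_pow] using pow_le_pow_left₀ (abs_nonneg _) (abs_le_maxNorm M i i) r

theorem norm_diag_one_add_le [DecidableEq m] (M : Matrix m m ℝ) :
    ‖(1 + M).diag‖ ≤ 1 + maxNorm M :=
  (pi_norm_le_iff_of_nonneg (by linarith [maxNorm_nonneg M])).2 fun i => by
    simpa using (abs_add_le 1 (M i i)).trans (by simpa using abs_le_maxNorm M i i)

end EntrywiseBounds

theorem specNorm_eq_l2_opNorm {m p : Type*} [Fintype m] [Fintype p] [DecidableEq p]
    (M : Matrix m p ℝ) :
    specNorm M = ‖M‖ :=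
  rfl

theorem stmt_4_general (n : ℕ) (Δ : Matrix (Fin n) (Fin n) ℝ)
    (hpsd : (1 + Δ).PosSemidef) (r : ℕ) :
    specNorm (hadPow Δ (r + 1)) ≤
      (1 + maxNorm Δ) * specNorm (hadPow Δ r) + maxNorm Δ ^ r := by
  have hsplit : hadPow Δ (r + 1) = (1 + Δ) ⊙ hadPow Δ r - 1 ⊙ hadPow Δ r := by
    rw [hadPow_succ, Matrix.add_hadamard, add_sub_cancel_left]
  rw [specNorm_eq_l2_opNorm, specNorm_eq_l2_opNorm, hsplit]
  calc ‖(1 + Δ) ⊙ hadPow Δ r - 1 ⊙ hadPow Δ r‖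
      ≤ ‖(1 + Δ) ⊙ hadPow Δ r‖ + ‖1 ⊙ hadPow Δ r‖ := norm_sub_le _ _
    _ ≤ ‖(1 + Δ).diag‖ * ‖hadPow Δ r‖ + ‖(hadPow Δ r).diag‖ := by
        rw [Matrix.one_hadamard, Matrix.l2_opNorm_diagonal]
        gcongr
        exact hpsd.l2_opNorm_hadamard_le _
    _ ≤ (1 + maxNorm Δ) * ‖hadPow Δ r‖ + maxNorm Δ ^ r := by
        gcongr
        · exact norm_diag_one_add_le Δ
        · exact norm_diag_hadPow_le Δ r

theorem stmt_4 (n : ℕ) (Δ : Matrix (Fin n) (Fin n) ℝ) (hsym : Δ.IsSymm)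
    (hpsd : (1 + Δ).PosSemidef) (r : ℕ) (hr : 1 ≤ r) :
    specNorm (hadPow Δ (r + 1)) ≤
      (1 + maxNorm Δ) * specNorm (hadPow Δ r) + maxNorm Δ ^ r :=
  stmt_4_general n Δ hpsd r
end

section
/- Let Δ be a real symmetric n×n matrix such that I_n + Δ is positive semidefinite. Then for every integer r ≥ 1, ‖Δ^{∘(2r)}‖ ≤ ‖Δ‖_max^{2r−2}·‖Δ∘Δ‖. -/
open MeasureTheory ProbabilityTheory Filter
open scoped NNReal

lemma specNorm_le_of_abs_le {n : ℕ} (A B : Matrix (Fin n) (Fin n) ℝ)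
    (h : ∀ i j, |A i j| ≤ B i j) : specNorm A ≤ specNorm B := by
  unfold specNorm
  apply ContinuousLinearMap.opNorm_le_bound _ (norm_nonneg _)
  intro x
  set y : EuclideanSpace ℝ (Fin n) := (WithLp.equiv 2 (Fin n → ℝ)).symm (fun j => |x j|) with hy
  have hxy : ‖x‖ = ‖y‖ := by
    simp [hy, EuclideanSpace.norm_eq, abs_abs]
  have key : ‖(Matrix.toEuclideanLin A).toContinuousLinearMap x‖ ≤
      ‖(Matrix.toEuclideanLin B).toContinuousLinearMap y‖ := by
    simp only [LinearMap.coe_toContinuousLinearMap']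
    rw [EuclideanSpace.norm_eq, EuclideanSpace.norm_eq]
    apply Real.sqrt_le_sqrt
    apply Finset.sum_le_sum
    intro i _
    simp only [Real.norm_eq_abs, sq_abs]
    have hA : (Matrix.toEuclideanLin A x) i = ∑ j, A i j * x j := rfl
    have hB : (Matrix.toEuclideanLin B y) i = ∑ j, B i j * |x j| := rfl
    rw [hA, hB]
    have h1 : |∑ j, A i j * x j| ≤ ∑ j, B i j * |x j| := by
      refine (Finset.abs_sum_le_sum_abs _ _).trans (Finset.sum_le_sum fun j _ => ?_)
      rw [abs_mul]
      exact mul_le_mul_of_nonneg_right (h i j) (abs_nonneg _)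
    have h2 : (0:ℝ) ≤ ∑ j, B i j * |x j| := le_trans (abs_nonneg _) h1
    calc (∑ j, A i j * x j)^2 ≤ (∑ j, B i j * |x j|)^2 := by
          rw [← sq_abs (∑ j, A i j * x j)]; exact pow_le_pow_left₀ (abs_nonneg _) h1 2
      _ = _ := rfl
  calc ‖(Matrix.toEuclideanLin A).toContinuousLinearMap x‖
      ≤ ‖(Matrix.toEuclideanLin B).toContinuousLinearMap y‖ := key
    _ ≤ ‖(Matrix.toEuclideanLin B).toContinuousLinearMap‖ * ‖y‖ :=
        ContinuousLinearMap.le_opNorm _ _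
    _ = _ := by rw [hxy]

lemma specNorm_smul {n : ℕ} (c : ℝ) (A : Matrix (Fin n) (Fin n) ℝ) :
    specNorm (c • A) = |c| * specNorm A := by
  unfold specNorm
  rw [_root_.map_smul]
  have : ((c • Matrix.toEuclideanLin A).toContinuousLinearMap) =
      c • (Matrix.toEuclideanLin A).toContinuousLinearMap := rfl
  rw [this]
  exact (norm_smul c (LinearMap.toContinuousLinearMap (Matrix.toEuclideanLin A))).trans
    (by rw [Real.norm_eq_abs])

theorem stmt_5 (n : ℕ) (Δ : Matrix (Fin n) (Fin n) ℝ) (hsym : Δ.IsSymm)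
    (hpsd : (1 + Δ).PosSemidef) (r : ℕ) (hr : 1 ≤ r) :
    specNorm (hadPow Δ (2 * r)) ≤ maxNorm Δ ^ (2 * r - 2) * specNorm (hadPow Δ 2) := by
  have hmax_nonneg : 0 ≤ maxNorm Δ := by
    unfold maxNorm
    rcases Nat.eq_zero_or_pos n with h0 | hpos
    · subst h0
      simp [Real.iSup_of_isEmpty]
    · obtain ⟨i⟩ := Fin.pos_iff_nonempty.mp hpos
      refine le_trans (abs_nonneg (Δ i i)) ?_
      refine le_trans (le_ciSup (f := fun j => |Δ i j|)
        (Set.Finite.bddAbove (Set.finite_range _)) i) ?_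
      exact le_ciSup (f := fun i => ⨆ j, |Δ i j|)
        (Set.Finite.bddAbove (Set.finite_range _)) i
  have hmax : ∀ i j, |Δ i j| ≤ maxNorm Δ := by
    intro i j
    refine le_trans (le_ciSup (f := fun j => |Δ i j|)
      (Set.Finite.bddAbove (Set.finite_range _)) j) ?_
    exact le_ciSup (f := fun i => ⨆ j, |Δ i j|)
      (Set.Finite.bddAbove (Set.finite_range _)) i
  have key : specNorm (hadPow Δ (2*r)) ≤ specNorm ((maxNorm Δ ^ (2*r-2)) • hadPow Δ 2) := by
    apply specNorm_le_of_abs_le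
    intro i j
    simp only [hadPow, Matrix.smul_apply, Matrix.of_apply, smul_eq_mul]
    have h2 : 2 * r = (2*r - 2) + 2 := by omega
    rw [h2, pow_add, abs_mul]
    have : |Δ i j ^ (2*r-2)| ≤ maxNorm Δ ^ (2*r-2) := by
      rw [abs_pow]
      exact pow_le_pow_left₀ (abs_nonneg _) (hmax i j) _
    have h22 : |Δ i j ^ 2| = Δ i j ^ 2 := abs_of_nonneg (sq_nonneg _)
    rw [h22]
    exact mul_le_mul_of_nonneg_right this (sq_nonneg _)
  rw [specNorm_smul, abs_of_nonneg (pow_nonneg hmax_nonneg _)] at key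
  exact key
end

section
/- Let (Δ_n) be a sequence where Δ_n is a real symmetric n×n matrix with I_n + Δ_n positive semidefinite. Assume sup_n ‖Δ_n‖ < ∞ and ‖Δ_n‖_max → 0 as n → ∞. Then for every integer r ≥ 1 there exists C > 0 such that for all n, each of the four quantities ‖Δ_n^{∘(2r)}‖, ‖off(Δ_n^{∘(2r)})‖, ‖Δ_n^{∘(2r+1)}‖ and ‖off(Δ_n^{∘(2r+1)})‖ is at most C·‖Δ_n‖_max^{2r−2}. -/
open MeasureTheory ProbabilityTheory Filter
open scoped NNReal

/-- The matrix with the diagonal entries replaced by `0`. -/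
def offDiag {m : Type*} [DecidableEq m] (M : Matrix m m ℝ) : Matrix m m ℝ :=
  Matrix.of fun i j => if i = j then 0 else M i j

lemma specNorm_nonneg {n : ℕ} (M : Matrix (Fin n) (Fin n) ℝ) : 0 ≤ specNorm M :=
  norm_nonneg _

lemma maxNorm_nonneg_s6 {n : ℕ} (M : Matrix (Fin n) (Fin n) ℝ) : 0 ≤ maxNorm M :=
  Real.iSup_nonneg fun _ => Real.iSup_nonneg fun _ => abs_nonneg _

lemma entry_le_maxNorm {n : ℕ} (M : Matrix (Fin n) (Fin n) ℝ) (i j : Fin n) :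
    |M i j| ≤ maxNorm M := by
  have h1 : |M i j| ≤ ⨆ j, |M i j| :=
    le_ciSup (f := fun j => |M i j|) (Set.Finite.bddAbove (Set.finite_range _)) j
  exact h1.trans (le_ciSup (f := fun i => ⨆ j, |M i j|)
    (Set.Finite.bddAbove (Set.finite_range _)) i)

/-- Column sums of squares are bounded by the squared spectral norm. -/
lemma colsq_le {n : ℕ} (M : Matrix (Fin n) (Fin n) ℝ) (i : Fin n) :
    ∑ j, (M j i) ^ 2 ≤ specNorm M ^ 2 := by
  have h := (Matrix.toEuclideanLin M).toContinuousLinearMap.le_opNorm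
    (EuclideanSpace.single i (1 : ℝ))
  rw [EuclideanSpace.norm_single, norm_one, mul_one] at h
  set y := (Matrix.toEuclideanLin M).toContinuousLinearMap (EuclideanSpace.single i (1 : ℝ))
    with hy
  have hyj : ∀ j, y j = M j i := by
    intro j
    simp [hy, Matrix.toEuclideanLin_apply, Matrix.mulVec, dotProduct,
      EuclideanSpace.single_apply, mul_ite]
  have h2 : ‖y‖ ^ 2 = ∑ j, (M j i) ^ 2 := by
    rw [EuclideanSpace.norm_eq, Real.sq_sqrt (by positivity)]
    exact Finset.sum_congr rfl fun j _ => by rw [hyj j, Real.norm_eq_abs, sq_abs]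
  calc ∑ j, (M j i) ^ 2 = ‖y‖ ^ 2 := h2.symm
    _ ≤ specNorm M ^ 2 := pow_le_pow_left₀ (norm_nonneg _) h 2

lemma maxNorm_le_specNorm {n : ℕ} (M : Matrix (Fin n) (Fin n) ℝ) :
    maxNorm M ≤ specNorm M := by
  refine Real.iSup_le (fun i => Real.iSup_le (fun j => ?_) (specNorm_nonneg M))
    (specNorm_nonneg M)
  have h1 : (M i j) ^ 2 ≤ ∑ i', (M i' j) ^ 2 :=
    Finset.single_le_sum (f := fun i' => (M i' j) ^ 2)
      (fun _ _ => sq_nonneg _) (Finset.mem_univ i)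
  have h2 : (M i j) ^ 2 ≤ specNorm M ^ 2 := h1.trans (colsq_le M j)
  calc |M i j| = Real.sqrt ((M i j) ^ 2) := (Real.sqrt_sq_eq_abs _).symm
    _ ≤ Real.sqrt (specNorm M ^ 2) := Real.sqrt_le_sqrt h2
    _ = specNorm M := Real.sqrt_sq (specNorm_nonneg M)

/-- Spectral norm is at most any common bound on the absolute row and column sums. -/
lemma specNorm_le_bound {n : ℕ} (M : Matrix (Fin n) (Fin n) ℝ) {R : ℝ} (hR : 0 ≤ R)
    (hrow : ∀ i, ∑ j, |M i j| ≤ R) (hcol : ∀ j, ∑ i, |M i j| ≤ R) :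
    specNorm M ≤ R := by
  refine ContinuousLinearMap.opNorm_le_bound _ hR fun x => ?_
  set y := (Matrix.toEuclideanLin M).toContinuousLinearMap x with hy
  have hyj : ∀ i, y i = ∑ j, M i j * x j := by
    intro i
    simp [hy, Matrix.toEuclideanLin_apply, Matrix.mulVec, dotProduct]
  have h1 : ∀ i, (y i) ^ 2 ≤ R * ∑ j, |M i j| * (x j) ^ 2 := by
    intro i
    rw [hyj i]
    have habs : |∑ j, M i j * x j| ≤ ∑ j, |M i j| * |x j| := by
      refine (Finset.abs_sum_le_sum_abs _ _).trans (le_of_eq ?_)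
      exact Finset.sum_congr rfl fun j _ => abs_mul _ _
    calc (∑ j, M i j * x j) ^ 2 = |∑ j, M i j * x j| ^ 2 := (sq_abs _).symm
      _ ≤ (∑ j, |M i j| * |x j|) ^ 2 := pow_le_pow_left₀ (abs_nonneg _) habs 2
      _ = (∑ j, Real.sqrt |M i j| * (Real.sqrt |M i j| * |x j|)) ^ 2 := by
          congr 1
          refine Finset.sum_congr rfl fun j _ => ?_
          rw [← mul_assoc, Real.mul_self_sqrt (abs_nonneg _)]
      _ ≤ (∑ j, Real.sqrt |M i j| ^ 2) * (∑ j, (Real.sqrt |M i j| * |x j|) ^ 2) :=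
          Finset.sum_mul_sq_le_sq_mul_sq _ _ _
      _ = (∑ j, |M i j|) * (∑ j, |M i j| * (x j) ^ 2) := by
          congr 1
          · exact Finset.sum_congr rfl fun j _ => Real.sq_sqrt (abs_nonneg _)
          · refine Finset.sum_congr rfl fun j _ => ?_
            rw [mul_pow, Real.sq_sqrt (abs_nonneg _), sq_abs]
      _ ≤ R * (∑ j, |M i j| * (x j) ^ 2) := by
          refine mul_le_mul_of_nonneg_right (hrow i) ?_
          exact Finset.sum_nonneg fun j _ => mul_nonneg (abs_nonneg _) (sq_nonneg _)
  have h2 : ∑ i, (y i) ^ 2 ≤ (R * ‖x‖) ^ 2 := by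
    calc ∑ i, (y i) ^ 2 ≤ ∑ i, R * ∑ j, |M i j| * (x j) ^ 2 :=
          Finset.sum_le_sum fun i _ => h1 i
      _ = R * ∑ j, (∑ i, |M i j|) * (x j) ^ 2 := by
          rw [← Finset.mul_sum]
          congr 1
          rw [Finset.sum_comm]
          exact Finset.sum_congr rfl fun j _ => (Finset.sum_mul _ _ _).symm
      _ ≤ R * ∑ j, R * (x j) ^ 2 := by
          refine mul_le_mul_of_nonneg_left ?_ hR
          exact Finset.sum_le_sum fun j _ =>
            mul_le_mul_of_nonneg_right (hcol j) (sq_nonneg _)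
      _ = R ^ 2 * ∑ j, (x j) ^ 2 := by rw [← Finset.mul_sum]; ring
      _ = (R * ‖x‖) ^ 2 := by
          rw [EuclideanSpace.norm_eq x, mul_pow, Real.sq_sqrt (by positivity)]
          congr 1
          exact Finset.sum_congr rfl fun j _ => by rw [Real.norm_eq_abs, sq_abs]
  have h3 : ‖y‖ ^ 2 = ∑ i, (y i) ^ 2 := by
    rw [EuclideanSpace.norm_eq, Real.sq_sqrt (by positivity)]
    exact Finset.sum_congr rfl fun j _ => by rw [Real.norm_eq_abs, sq_abs]
  have h4 : ‖y‖ ^ 2 ≤ (R * ‖x‖) ^ 2 := h3 ▸ h2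
  nlinarith [norm_nonneg y, mul_nonneg hR (norm_nonneg x)]

/-- Key estimate. -/
lemma key_est {n : ℕ} (M : Matrix (Fin n) (Fin n) ℝ) (hs : M.IsSymm) {K : ℝ} (hK : 1 ≤ K)
    (hMK : specNorm M ≤ K) (N : Matrix (Fin n) (Fin n) ℝ) (k : ℕ)
    (hN : ∀ i j, |N i j| ≤ |M i j| ^ (k + 2)) :
    specNorm N ≤ K ^ 2 * maxNorm M ^ k := by
  have hK0 : (0:ℝ) ≤ K := zero_le_one.trans hK
  have hε0 : 0 ≤ maxNorm M := maxNorm_nonneg_s6 M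
  have hsym' : ∀ i j, M i j = M j i := fun i j => Matrix.IsSymm.apply hs j i
  have hsum : ∀ i, ∑ j, (M i j) ^ 2 ≤ K ^ 2 := by
    intro i
    calc ∑ j, (M i j) ^ 2 = ∑ j, (M j i) ^ 2 :=
          Finset.sum_congr rfl fun j _ => by rw [hsym' i j]
      _ ≤ specNorm M ^ 2 := colsq_le M i
      _ ≤ K ^ 2 := pow_le_pow_left₀ (specNorm_nonneg M) hMK 2
  have hMrow : ∀ i, ∑ j, |M i j| ^ (k + 2) ≤ K ^ 2 * maxNorm M ^ k := by
    intro i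
    calc ∑ j, |M i j| ^ (k + 2) ≤ ∑ j, maxNorm M ^ k * (M i j) ^ 2 := by
          refine Finset.sum_le_sum fun j _ => ?_
          rw [pow_add, sq_abs]
          exact mul_le_mul_of_nonneg_right
            (pow_le_pow_left₀ (abs_nonneg _) (entry_le_maxNorm M i j) k) (sq_nonneg _)
      _ = maxNorm M ^ k * ∑ j, (M i j) ^ 2 := (Finset.mul_sum _ _ _).symm
      _ ≤ maxNorm M ^ k * K ^ 2 :=
          mul_le_mul_of_nonneg_left (hsum i) (pow_nonneg hε0 k)
      _ = K ^ 2 * maxNorm M ^ k := mul_comm _ _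
  refine specNorm_le_bound N (by positivity) (fun i => ?_) (fun j => ?_)
  · exact (Finset.sum_le_sum fun j _ => hN i j).trans (hMrow i)
  · calc ∑ i, |N i j| ≤ ∑ i, |M i j| ^ (k + 2) := Finset.sum_le_sum fun i _ => hN i j
      _ = ∑ i, |M j i| ^ (k + 2) :=
          Finset.sum_congr rfl fun i _ => by rw [hsym' i j]
      _ ≤ K ^ 2 * maxNorm M ^ k := hMrow j

lemma abs_offDiag_le {n : ℕ} (N : Matrix (Fin n) (Fin n) ℝ) (i j : Fin n) :
    |offDiag N i j| ≤ |N i j| := by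
  by_cases h : i = j <;> simp [offDiag, h]

theorem stmt_6 (Δ : (n : ℕ) → Matrix (Fin n) (Fin n) ℝ)
    (hsym : ∀ n, (Δ n).IsSymm) (hpsd : ∀ n, (1 + Δ n).PosSemidef)
    (hbdd : ∃ K : ℝ, ∀ n, specNorm (Δ n) ≤ K)
    (hmax : Tendsto (fun n => maxNorm (Δ n)) atTop (nhds 0))
    (r : ℕ) (hr : 1 ≤ r) :
    ∃ C > (0:ℝ), ∀ n,
      specNorm (hadPow (Δ n) (2 * r)) ≤ C * maxNorm (Δ n) ^ (2 * r - 2) ∧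
      specNorm (offDiag (hadPow (Δ n) (2 * r))) ≤ C * maxNorm (Δ n) ^ (2 * r - 2) ∧
      specNorm (hadPow (Δ n) (2 * r + 1)) ≤ C * maxNorm (Δ n) ^ (2 * r - 2) ∧
      specNorm (offDiag (hadPow (Δ n) (2 * r + 1))) ≤ C * maxNorm (Δ n) ^ (2 * r - 2) := by
  obtain ⟨K₀, hK₀⟩ := hbdd
  set K := max K₀ 1 with hKdef
  have hK1 : (1:ℝ) ≤ K := le_max_right _ _
  have hK0 : (0:ℝ) ≤ K := zero_le_one.trans hK1
  have hKs : ∀ n, specNorm (Δ n) ≤ K := fun n => (hK₀ n).trans (le_max_left _ _)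
  refine ⟨K ^ 4, by positivity, fun n => ?_⟩
  set ε := maxNorm (Δ n) with hε
  have hε0 : 0 ≤ ε := maxNorm_nonneg_s6 _
  have hεK : ε ≤ K := (maxNorm_le_specNorm _).trans (hKs n)
  set s := 2 * r - 2 with hsdef
  have h2r : 2 * r = s + 2 := by omega
  have h2r1 : 2 * r + 1 = (s + 1) + 2 := by omega
  have hεs : 0 ≤ ε ^ s := pow_nonneg hε0 s
  have hEven : specNorm (hadPow (Δ n) (2 * r)) ≤ K ^ 2 * ε ^ s := by
    refine key_est (Δ n) (hsym n) hK1 (hKs n) _ s fun i j => le_of_eq ?_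
    simp [hadPow, abs_pow, h2r]
  have hOdd : specNorm (hadPow (Δ n) (2 * r + 1)) ≤ K ^ 2 * ε ^ (s + 1) := by
    refine key_est (Δ n) (hsym n) hK1 (hKs n) _ (s + 1) fun i j => le_of_eq ?_
    simp [hadPow, abs_pow, h2r1]
  have hEvenOff : specNorm (offDiag (hadPow (Δ n) (2 * r))) ≤ K ^ 2 * ε ^ s := by
    refine key_est (Δ n) (hsym n) hK1 (hKs n) _ s fun i j => ?_
    refine (abs_offDiag_le _ i j).trans (le_of_eq ?_)
    simp [hadPow, abs_pow, h2r]
  have hOddOff : specNorm (offDiag (hadPow (Δ n) (2 * r + 1))) ≤ K ^ 2 * ε ^ (s + 1) := by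
    refine key_est (Δ n) (hsym n) hK1 (hKs n) _ (s + 1) fun i j => ?_
    refine (abs_offDiag_le _ i j).trans (le_of_eq ?_)
    simp [hadPow, abs_pow, h2r1]
  have hc1 : K ^ 2 * ε ^ s ≤ K ^ 4 * ε ^ s :=
    mul_le_mul_of_nonneg_right (pow_le_pow_right₀ hK1 (by norm_num)) hεs
  have hc2 : K ^ 2 * ε ^ (s + 1) ≤ K ^ 4 * ε ^ s := by
    rw [pow_succ]
    calc K ^ 2 * (ε ^ s * ε) ≤ K ^ 2 * (ε ^ s * K) := by
          refine mul_le_mul_of_nonneg_left (mul_le_mul_of_nonneg_left hεK hεs) (by positivity)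
      _ ≤ K ^ 4 * ε ^ s := by nlinarith [pow_nonneg hK0 2, pow_nonneg hK0 3]
  exact ⟨hEven.trans hc1, hEvenOff.trans hc1, hOdd.trans hc2, hOddOff.trans hc2⟩
end

section
/- Let A and B be real symmetric n×n matrices and let z ∈ ℂ with Im(z) > 0. Then |(1/n)·Tr((A − z·I_n)^{-1} − (B − z·I_n)^{-1})| ≤ ‖A − B‖_F/(√n·Im(z)²), where the inverses are taken over ℂ (they exist since A, B are symmetric and z is non-real). -/
open MeasureTheory ProbabilityTheory Filter
open scoped NNReal

/-- Frobenius norm of a real matrix. -/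
noncomputable def frobNorm {m p : Type*} [Fintype m] [Fintype p] (M : Matrix m p ℝ) : ℝ :=
  Real.sqrt (∑ i, ∑ j, (M i j) ^ 2)

/-!
With `R_H = (H - z)⁻¹`, the resolvent identity and cyclicity of the trace give
`tr (R_A - R_B) = tr (R_B R_A (B - A))`, which Cauchy–Schwarz for the Frobenius inner product
bounds by `‖R_B R_A‖_F ‖A - B‖_F`. For Hermitian `H` one has `Im ⟪x, (H - z) x⟫ = -Im z ‖x‖²`,
so `R_H` shrinks Euclidean norms by at least `Im z`; applied column by column this gives
`‖R_B R_A‖_F ≤ ‖R_A‖_F / Im z ≤ √n / (Im z)²`.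
-/

open Matrix WithLp

theorem LinearMap.IsSymmetric.abs_im_mul_norm_le {E : Type*} [NormedAddCommGroup E]
    [InnerProductSpace ℂ E] {T : E →ₗ[ℂ] E} (hT : T.IsSymmetric) (z : ℂ) (x : E) :
    |z.im| * ‖x‖ ≤ ‖T x - z • x‖ := by
  have him : (inner ℂ x (T x - z • x)).im = -(z.im * ‖x‖ ^ 2) := by
    have h0 : (inner ℂ x (T x)).im = 0 := hT.im_inner_self_apply x
    rw [inner_sub_right, inner_smul_right, inner_self_eq_norm_sq_to_K]
    simp [sq, Complex.mul_im, h0]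
  have hmul : |z.im| * ‖x‖ * ‖x‖ ≤ ‖T x - z • x‖ * ‖x‖ := calc
    |z.im| * ‖x‖ * ‖x‖ = |(inner ℂ x (T x - z • x)).im| := by
      rw [him, abs_neg, abs_mul, abs_sq]; ring
    _ ≤ ‖inner ℂ x (T x - z • x)‖ := Complex.abs_im_le_norm _
    _ ≤ ‖T x - z • x‖ * ‖x‖ := (norm_inner_le_norm _ _).trans_eq (mul_comm _ _)
  rcases (norm_nonneg x).eq_or_lt with hx | hx
  · rw [← hx, mul_zero]; exact norm_nonneg _
  · exact le_of_mul_le_mul_right hmul hx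

namespace Matrix

section Frobenius

open scoped Norms.Frobenius

variable {l m n : Type*} [Fintype l] [Fintype m] [Fintype n]

theorem frobenius_norm_one [DecidableEq m] {α : Type*} [SeminormedAddCommGroup α] [One α]
    [NormOneClass α] : ‖(1 : Matrix m m α)‖ = √(Fintype.card m) := by
  have h := congrArg NNReal.toReal (frobenius_nnnorm_one (n := m) (α := α))
  rwa [nnnorm_one (G := α), mul_one, Real.coe_sqrt, NNReal.coe_natCast] at h

theorem frobNorm_eq_norm (M : Matrix m n ℝ) : frobNorm M = ‖M‖ := by
  simp [frobNorm, frobenius_norm_def, Real.sqrt_eq_rpow]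

theorem frobenius_norm_mul_le_of_mulVec {α : Type*} [NonUnitalSeminormedRing α]
    {M : Matrix l m α} {c : ℝ} (hc : 0 ≤ c) (hM : ∀ v, ‖toLp 2 (M *ᵥ v)‖ ≤ c * ‖toLp 2 v‖)
    (Y : Matrix m n α) : ‖M * Y‖ ≤ c * ‖Y‖ := by
  rw [← frobenius_norm_transpose, ← frobenius_norm_transpose Y]
  change ‖toLp 2 fun j => toLp 2 ((M * Y)ᵀ j)‖ ≤ c * ‖toLp 2 fun j => toLp 2 (Yᵀ j)‖
  refine le_of_pow_le_pow_left₀ two_ne_zero (by positivity) ?_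
  rw [mul_pow, PiLp.norm_sq_eq_of_L2, PiLp.norm_sq_eq_of_L2, Finset.mul_sum]
  gcongr with j
  have hcol : (M * Y)ᵀ j = M *ᵥ Yᵀ j := by ext i; simp [mul_apply, mulVec, dotProduct]
  simpa [hcol, mul_pow] using pow_le_pow_left₀ (norm_nonneg _) (hM (Yᵀ j)) 2

theorem norm_trace_mul_le {𝕜 : Type*} [RCLike 𝕜] (P : Matrix m n 𝕜) (C : Matrix n m 𝕜) :
    ‖trace (P * C)‖ ≤ ‖P‖ * ‖C‖ := by
  -- The Frobenius norm is by definition the norm of `L²(m, L²(n))`, where `trace (P * C)`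
  -- is the inner product of `star P` and `Cᵀ`.
  let x : PiLp 2 fun _ : m => EuclideanSpace 𝕜 n := toLp 2 fun i => toLp 2 (star (P i))
  let y : PiLp 2 fun _ : m => EuclideanSpace 𝕜 n := toLp 2 fun i => toLp 2 (Cᵀ i)
  have hxy : trace (P * C) = inner 𝕜 x y := by
    simp [x, y, trace, mul_apply, PiLp.inner_apply, mul_comm]
  have hx : ‖x‖ = ‖P‖ := (frobenius_norm_map_eq P star norm_star : _)
  have hy : ‖y‖ = ‖C‖ := frobenius_norm_transpose C
  rw [hxy, ← hx, ← hy]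
  exact norm_inner_le_norm x y

end Frobenius

namespace IsHermitian

variable {m : Type*} [Fintype m] [DecidableEq m] {H K : Matrix m m ℂ} {z : ℂ}

theorem abs_im_mul_norm_le_norm_sub_smul_one_mulVec (hH : H.IsHermitian) (z : ℂ)
    (v : m → ℂ) : |z.im| * ‖toLp 2 v‖ ≤ ‖toLp 2 ((H - z • 1) *ᵥ v)‖ := by
  simpa [sub_mulVec, smul_mulVec] using
    (isSymmetric_toEuclideanLin_iff.mpr hH).abs_im_mul_norm_le z (toLp 2 v)

theorem isUnit_sub_smul_one (hH : H.IsHermitian) (hz : z.im ≠ 0) : IsUnit (H - z • 1) := by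
  refine mulVec_injective_iff_isUnit.mp fun u v huv => ?_
  have h := hH.abs_im_mul_norm_le_norm_sub_smul_one_mulVec z (u - v)
  rw [mulVec_sub, huv, sub_self, toLp_zero, norm_zero] at h
  have : ‖toLp 2 (u - v)‖ = 0 :=
    le_antisymm ((mul_nonpos_iff_pos_imp_nonpos.mp h).1 (abs_pos.mpr hz)) (norm_nonneg _)
  rwa [norm_eq_zero, toLp_eq_zero, sub_eq_zero] at this

theorem norm_inv_sub_smul_one_mulVec_le (hH : H.IsHermitian) (hz : z.im ≠ 0) (v : m → ℂ) :
    ‖toLp 2 ((H - z • 1)⁻¹ *ᵥ v)‖ ≤ |z.im|⁻¹ * ‖toLp 2 v‖ := by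
  have h := hH.abs_im_mul_norm_le_norm_sub_smul_one_mulVec z ((H - z • 1)⁻¹ *ᵥ v)
  rw [mulVec_mulVec, mul_nonsing_inv _ ((hH.isUnit_sub_smul_one hz).map detMonoidHom),
    one_mulVec] at h
  rwa [inv_mul_eq_div, le_div_iff₀' (abs_pos.mpr hz)]

open scoped Norms.Frobenius

theorem frobenius_norm_inv_sub_smul_one_mul_le {n : Type*} [Fintype n] (hH : H.IsHermitian)
    (hz : z.im ≠ 0) (Y : Matrix m n ℂ) : ‖(H - z • 1)⁻¹ * Y‖ ≤ |z.im|⁻¹ * ‖Y‖ :=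
  frobenius_norm_mul_le_of_mulVec (by positivity) (hH.norm_inv_sub_smul_one_mulVec_le hz) Y

theorem frobenius_norm_inv_sub_smul_one_le (hH : H.IsHermitian) (hz : z.im ≠ 0) :
    ‖(H - z • 1)⁻¹‖ ≤ |z.im|⁻¹ * √(Fintype.card m) := by
  have h := hH.frobenius_norm_inv_sub_smul_one_mul_le hz (1 : Matrix m m ℂ)
  rwa [Matrix.mul_one, frobenius_norm_one] at h

theorem norm_trace_inv_sub_smul_one_sub_le (hH : H.IsHermitian) (hK : K.IsHermitian)
    (hz : z.im ≠ 0) :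
    ‖trace ((H - z • 1)⁻¹ - (K - z • 1)⁻¹)‖ ≤ √(Fintype.card m) * ‖H - K‖ / z.im ^ 2 := by
  have hunits : IsUnit (H - z • 1) ↔ IsUnit (K - z • 1) :=
    iff_of_true (hH.isUnit_sub_smul_one hz) (hK.isUnit_sub_smul_one hz)
  calc ‖trace ((H - z • 1)⁻¹ - (K - z • 1)⁻¹)‖
      = ‖trace ((K - z • 1)⁻¹ * (H - z • 1)⁻¹ * (K - H))‖ := by
        rw [inv_sub_inv hunits, sub_sub_sub_cancel_right, trace_mul_cycle]
    _ ≤ ‖(K - z • 1)⁻¹ * (H - z • 1)⁻¹‖ * ‖K - H‖ := norm_trace_mul_le _ _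
    _ ≤ |z.im|⁻¹ * (|z.im|⁻¹ * √(Fintype.card m)) * ‖H - K‖ := by
        rw [norm_sub_rev]
        gcongr
        exact (hK.frobenius_norm_inv_sub_smul_one_mul_le hz _).trans
          (by gcongr; exact hH.frobenius_norm_inv_sub_smul_one_le hz)
    _ = √(Fintype.card m) * ‖H - K‖ / z.im ^ 2 := by
        rw [← sq_abs z.im]; field_simp

end IsHermitian

end Matrix

theorem stmt_10 (n : ℕ) (A B : Matrix (Fin n) (Fin n) ℝ)
    (hA : A.IsSymm) (hB : B.IsSymm) (z : ℂ) (hz : 0 < z.im) :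
    ‖((n : ℂ)⁻¹ *
        Matrix.trace ((A.map (fun x => (x : ℂ)) - z • 1)⁻¹ -
          (B.map (fun x => (x : ℂ)) - z • 1)⁻¹))‖
      ≤ frobNorm (A - B) / (Real.sqrt n * z.im ^ 2) := by
  have hofReal : Function.Semiconj (fun x : ℝ => (x : ℂ)) star star :=
    fun x => (Complex.conj_ofReal x).symm
  have hA' := (isHermitian_iff_isSymm.mpr hA).map _ hofReal
  have hB' := (isHermitian_iff_isSymm.mpr hB).map _ hofReal
  open scoped Matrix.Norms.Frobenius in
  have hdist : frobNorm (A - B) = ‖A.map (fun x => (x : ℂ)) - B.map (fun x => (x : ℂ))‖ := by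
    rw [frobNorm_eq_norm, ← Matrix.map_sub _ Complex.ofReal_sub,
      frobenius_norm_map_eq _ _ Complex.norm_real]
  have htrace := hA'.norm_trace_inv_sub_smul_one_sub_le hB' hz.ne'
  rw [Fintype.card_fin, ← hdist] at htrace
  calc _ = (n : ℝ)⁻¹ * ‖trace ((A.map (fun x => (x : ℂ)) - z • 1)⁻¹ -
          (B.map (fun x => (x : ℂ)) - z • 1)⁻¹)‖ := by simp
    _ ≤ (n : ℝ)⁻¹ * (√n * frobNorm (A - B) / z.im ^ 2) := by gcongr
    _ = frobNorm (A - B) / (√n * z.im ^ 2) := by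
        rw [← mul_div_assoc, ← mul_assoc, inv_mul_eq_div, Real.sqrt_div_self',
          one_div_mul_eq_div, div_div]
end

section
/- Let μ be a probability measure on [0,∞) with finite first and second moments m₁ = ∫ t dμ(t) and m₂ = ∫ t² dμ(t); let ν̌ be a probability measure on [0,∞); let γ > 0 and z ∈ ℂ⁺. Set l = −1/g_ν̌(z), which is well defined with Im(l) > 0 since Im(g_ν̌(z)) > 0. Assume that l satisfies the self-consistent equation l = z + γ·l + γ·l²·g_μ(l). Then: (a) Im(l/z) ≥ 0; (b) Im(z) ≤ Im(l) ≤ Im(z)/2 + √(γ·m₂ + Im(z)²/4); (c) |l| ≤ |z| + γ·m₁·|z|/Im(z). -/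
open MeasureTheory ProbabilityTheory Filter
open scoped NNReal

/-- Stieltjes transform `g_μ(z) = ∫ (t − z)⁻¹ dμ(t)` of a measure on `ℝ`. -/
noncomputable def stieltjesT (μ : Measure ℝ) (z : ℂ) : ℂ := ∫ t, ((t : ℂ) - z)⁻¹ ∂μ

/-!
Since `ν̌` is carried by `[0, ∞)`, both `g = g_ν̌(z)` and `z g` lie in the closed upper half-plane,
so `l = -1/g` and `l / z = -1/(z g)` do too. Writing `h_l(t) = l t / (t - l) = l + l² / (t - l)`,
the self-consistent equation reads `l = z + γ ∫ h_l dμ`. Taking imaginary parts,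
`Im h_l(t) = t² Im l / |t - l|² ∈ [0, t² / Im l]`, which gives `Im z ≤ Im l ≤ Im z + γ m₂ / Im l`,
a quadratic inequality for `Im l`. Taking norms, for `t ≥ 0` the point `t z / l` lies in the closed
lower half-plane because `Im(l/z) ≥ 0`, so its distance to `z` is at least `Im z`; this is
`|l| Im z ≤ |z| |t - l|`, i.e. `|h_l(t)| ≤ |z| t / Im z`.
-/

open Complex

lemma ae_nonneg_of_measure_Iio_eq_zero {μ : Measure ℝ} (hμ : μ (Set.Iio 0) = 0) :
    ∀ᵐ t ∂μ, 0 ≤ t := by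
  rw [ae_iff]
  simp only [not_le]
  exact hμ

lemma ofReal_sub_ne_zero {w : ℂ} (hw : w.im ≠ 0) (t : ℝ) : (t : ℂ) - w ≠ 0 := by
  intro h
  exact hw (by simpa using congrArg im h)

lemma abs_im_le_norm_ofReal_sub (w : ℂ) (t : ℝ) : |w.im| ≤ ‖(t : ℂ) - w‖ := by
  simpa using abs_im_le_norm ((t : ℂ) - w)

lemma im_integral {α : Type*} [MeasurableSpace α] {μ : Measure α} {f : α → ℂ}
    (hf : Integrable f μ) : (∫ x, f x ∂μ).im = ∫ x, (f x).im ∂μ :=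
  (integral_im hf).symm

lemma im_neg_one_div (u : ℂ) : (-1 / u).im = u.im / normSq u := by
  simp [neg_div, inv_im]

section Stieltjes

variable (μ : Measure ℝ) [IsFiniteMeasure μ]

lemma integrable_inv_ofReal_sub {w : ℂ} (hw : w.im ≠ 0) :
    Integrable (fun t : ℝ => ((t : ℂ) - w)⁻¹) μ := by
  refine (integrable_const |w.im|⁻¹).mono' ?_ (ae_of_all _ fun t => ?_)
  · exact ((continuous_ofReal.sub continuous_const).inv₀
      (ofReal_sub_ne_zero hw)).aestronglyMeasurable
  · rw [norm_inv]
    exact inv_anti₀ (abs_pos.2 hw) (abs_im_le_norm_ofReal_sub w t)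

lemma stieltjesT_im_pos [NeZero μ] {w : ℂ} (hw : 0 < w.im) : 0 < (stieltjesT μ w).im := by
  have hpos : ∀ t : ℝ, 0 < w.im / normSq ((t : ℂ) - w) := fun t =>
    div_pos hw (normSq_pos.2 (ofReal_sub_ne_zero hw.ne' t))
  have hint := integrable_inv_ofReal_sub μ hw.ne'
  have him : (stieltjesT μ w).im = ∫ t, w.im / normSq ((t : ℂ) - w) ∂μ := by
    rw [stieltjesT, im_integral hint]
    simp [inv_im]
  rw [him, integral_pos_iff_support_of_nonneg (fun t => (hpos t).le) (by simpa using hint.im),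
    Function.support_eq_univ fun t => (hpos t).ne']
  simp [NeZero.ne μ]

lemma im_mul_stieltjesT_nonneg (hμ : μ (Set.Iio 0) = 0) {w : ℂ} (hw : 0 < w.im) :
    0 ≤ (w * stieltjesT μ w).im := by
  have hint := (integrable_inv_ofReal_sub μ hw.ne').const_mul w
  rw [stieltjesT, ← integral_const_mul, im_integral hint]
  refine integral_nonneg_of_ae ?_
  filter_upwards [ae_nonneg_of_measure_Iio_eq_zero hμ] with t ht
  have : (w * ((t : ℂ) - w)⁻¹).im = t * w.im / normSq ((t : ℂ) - w) := by
    simp only [mul_im, inv_re, inv_im, sub_re, sub_im, ofReal_re, ofReal_im]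
    ring
  exact this ▸ div_nonneg (mul_nonneg ht hw.le) (normSq_nonneg _)

end Stieltjes

lemma le_half_add_sqrt_of_le_add_div {a b c : ℝ} (ha : 0 < a) (h : a ≤ b + c / a) :
    a ≤ b / 2 + √(c + b ^ 2 / 4) := by
  have hquad : a * a ≤ b * a + c := by
    have := mul_le_mul_of_nonneg_right h ha.le
    rwa [add_mul, div_mul_cancel₀ _ ha.ne'] at this
  have := Real.abs_le_sqrt (x := a - b / 2) (y := c + b ^ 2 / 4) (by nlinarith)
  linarith [le_abs_self (a - b / 2)]

lemma norm_mul_im_le_norm_ofReal_sub_mul {w : ℂ} (hw : 0 ≤ w.im) (z : ℂ) {t : ℝ} (ht : 0 ≤ t) :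
    ‖w‖ * z.im ≤ ‖(t : ℂ) - w * z‖ := by
  rcases eq_or_ne w 0 with rfl | hw0
  · simp
  have h_im : ((t : ℂ) / w).im ≤ 0 := by
    rw [div_im]
    simp only [ofReal_re, ofReal_im, zero_mul, zero_div, zero_sub, neg_nonpos]
    exact div_nonneg (mul_nonneg ht hw) (normSq_nonneg w)
  calc ‖w‖ * z.im ≤ ‖w‖ * ‖(t : ℂ) / w - z‖ := by
        gcongr
        have := (neg_le_abs _).trans (abs_im_le_norm ((t : ℂ) / w - z))
        rw [sub_im] at this
        linarith
    _ = ‖(t : ℂ) - w * z‖ := by rw [← norm_mul, mul_sub, mul_div_cancel₀ _ hw0]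

lemma norm_mul_ofReal_div_ofReal_sub_le {l z : ℂ} (hz : 0 < z.im) (hlz : 0 ≤ (l / z).im)
    {t : ℝ} (ht : 0 ≤ t) : ‖l * t / ((t : ℂ) - l)‖ ≤ ‖z‖ / z.im * t := by
  have hz0 : z ≠ 0 := fun h => hz.ne' (by simp [h])
  have key : ‖l‖ * z.im ≤ ‖z‖ * ‖(t : ℂ) - l‖ := by
    have := norm_mul_im_le_norm_ofReal_sub_mul hlz z ht
    rw [div_mul_cancel₀ _ hz0, norm_div, div_mul_eq_mul_div, div_le_iff₀ (norm_pos_iff.2 hz0)] at this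
    linarith
  rw [norm_div, norm_mul, norm_real, Real.norm_of_nonneg ht]
  rcases (norm_nonneg ((t : ℂ) - l)).eq_or_lt with h0 | hpos
  · rw [← h0, div_zero]
    exact mul_nonneg (div_nonneg (norm_nonneg _) hz.le) ht
  · rw [div_le_iff₀ hpos, div_mul_eq_mul_div, div_mul_eq_mul_div, le_div_iff₀ hz]
    nlinarith [mul_le_mul_of_nonneg_right key ht]

lemma im_mul_ofReal_div_ofReal_sub (l : ℂ) (t : ℝ) :
    (l * t / ((t : ℂ) - l)).im = t ^ 2 * l.im / normSq ((t : ℂ) - l) := by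
  rw [div_im]
  simp only [mul_im, mul_re, sub_re, sub_im, ofReal_re, ofReal_im]
  ring

lemma im_mul_ofReal_div_ofReal_sub_le {l : ℂ} (hl : 0 < l.im) (t : ℝ) :
    (l * t / ((t : ℂ) - l)).im ≤ t ^ 2 / l.im := by
  have hN : l.im ^ 2 ≤ normSq ((t : ℂ) - l) := by
    simpa [sq] using im_sq_le_normSq ((t : ℂ) - l)
  rw [im_mul_ofReal_div_ofReal_sub, div_le_div_iff₀ ((pow_pos hl 2).trans_le hN) hl]
  nlinarith [mul_le_mul_of_nonneg_left hN (sq_nonneg t)]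

lemma mul_ofReal_div_ofReal_sub_eq {l : ℂ} (hl : l.im ≠ 0) (t : ℝ) :
    l * t / ((t : ℂ) - l) = l + l ^ 2 * ((t : ℂ) - l)⁻¹ := by
  field_simp [ofReal_sub_ne_zero hl t]
  ring

section SelfEnergy

variable (μ : Measure ℝ) [IsFiniteMeasure μ] {l : ℂ}

lemma integrable_mul_ofReal_div_ofReal_sub (hl : l.im ≠ 0) :
    Integrable (fun t : ℝ => l * t / ((t : ℂ) - l)) μ := by
  simp_rw [mul_ofReal_div_ofReal_sub_eq hl]
  exact (integrable_const l).add ((integrable_inv_ofReal_sub μ hl).const_mul _)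

lemma integral_mul_ofReal_div_ofReal_sub [IsProbabilityMeasure μ] (hl : l.im ≠ 0) :
    ∫ t, l * t / ((t : ℂ) - l) ∂μ = l + l ^ 2 * stieltjesT μ l := by
  simp_rw [mul_ofReal_div_ofReal_sub_eq hl]
  rw [integral_add (integrable_const l) ((integrable_inv_ofReal_sub μ hl).const_mul _),
    integral_const, integral_const_mul, probReal_univ, one_smul, stieltjesT]

lemma im_integral_mul_ofReal_div_ofReal_sub_nonneg (hl : 0 < l.im) :
    0 ≤ (∫ t, l * t / ((t : ℂ) - l) ∂μ).im := by
  rw [im_integral (integrable_mul_ofReal_div_ofReal_sub μ hl.ne')]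
  refine integral_nonneg fun t => ?_
  rw [im_mul_ofReal_div_ofReal_sub]
  exact div_nonneg (mul_nonneg (sq_nonneg t) hl.le) (normSq_nonneg _)

lemma im_integral_mul_ofReal_div_ofReal_sub_le (hm2 : Integrable (fun t => t ^ 2) μ)
    (hl : 0 < l.im) : (∫ t, l * t / ((t : ℂ) - l) ∂μ).im ≤ (∫ t, t ^ 2 ∂μ) / l.im := by
  have hint := integrable_mul_ofReal_div_ofReal_sub μ hl.ne'
  rw [im_integral hint, ← integral_div]
  exact integral_mono hint.im (hm2.div_const _) (im_mul_ofReal_div_ofReal_sub_le hl)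

end SelfEnergy

lemma norm_integral_mul_ofReal_div_ofReal_sub_le {μ : Measure ℝ} (hμ : μ (Set.Iio 0) = 0)
    (hm1 : Integrable (fun t => t) μ) {l z : ℂ} (hz : 0 < z.im) (hlz : 0 ≤ (l / z).im) :
    ‖∫ t, l * t / ((t : ℂ) - l) ∂μ‖ ≤ ‖z‖ / z.im * ∫ t, t ∂μ := by
  rw [← integral_const_mul]
  refine norm_integral_le_of_norm_le (hm1.const_mul _) ?_
  filter_upwards [ae_nonneg_of_measure_Iio_eq_zero hμ] with t ht
  exact norm_mul_ofReal_div_ofReal_sub_le hz hlz ht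

theorem stmt_11 (μ ν : Measure ℝ) [IsProbabilityMeasure μ] [IsProbabilityMeasure ν]
    (hμs : μ (Set.Iio 0) = 0) (hνs : ν (Set.Iio 0) = 0)
    (hm1 : Integrable (fun t => t) μ) (hm2 : Integrable (fun t => t ^ 2) μ)
    (γ : ℝ) (hγ : 0 < γ) (z : ℂ) (hz : 0 < z.im)
    (l : ℂ) (hl : l = -1 / stieltjesT ν z)
    (heq : l = z + γ * l + γ * l ^ 2 * stieltjesT μ l) :
    0 ≤ (l / z).im ∧
    (z.im ≤ l.im ∧
      l.im ≤ z.im / 2 + Real.sqrt (γ * (∫ t, t ^ 2 ∂μ) + z.im ^ 2 / 4)) ∧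
    ‖l‖ ≤ ‖z‖ + γ * (∫ t, t ∂μ) * ‖z‖ / z.im := by
  have hg : 0 < (stieltjesT ν z).im := stieltjesT_im_pos ν hz
  have hl_im : 0 < l.im := by
    rw [hl, im_neg_one_div]
    exact div_pos hg (normSq_pos.2 fun h => hg.ne' (by simp [h]))
  have hlz : 0 ≤ (l / z).im := by
    rw [hl, div_div, mul_comm, im_neg_one_div]
    exact div_nonneg (im_mul_stieltjesT_nonneg ν hνs hz) (normSq_nonneg _)
  set F := ∫ t, l * t / ((t : ℂ) - l) ∂μ
  have hlF : l = z + γ * F := by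
    linear_combination heq - γ * integral_mul_ofReal_div_ofReal_sub μ hl_im.ne'
  have him : l.im = z.im + γ * F.im := by
    simpa using congrArg im hlF
  have hF_nonneg := im_integral_mul_ofReal_div_ofReal_sub_nonneg μ hl_im
  have hF_le := im_integral_mul_ofReal_div_ofReal_sub_le μ hm2 hl_im
  refine ⟨hlz, ⟨him ▸ le_add_of_nonneg_right (mul_nonneg hγ.le hF_nonneg), le_half_add_sqrt_of_le_add_div hl_im ?_⟩, ?_⟩
  · calc l.im = z.im + γ * F.im := him
      _ ≤ z.im + γ * ((∫ t, t ^ 2 ∂μ) / l.im) := by gcongr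
      _ = z.im + γ * (∫ t, t ^ 2 ∂μ) / l.im := by ring
  · calc ‖l‖ ≤ ‖z‖ + γ * ‖F‖ := by
          rw [hlF]
          simpa [abs_of_pos hγ] using norm_add_le z (γ * F)
      _ ≤ ‖z‖ + γ * (‖z‖ / z.im * ∫ t, t ∂μ) := by
          gcongr
          exact norm_integral_mul_ofReal_div_ofReal_sub_le hμs hm1 hz hlz
      _ = ‖z‖ + γ * (∫ t, t ∂μ) * ‖z‖ / z.im := by ring
end
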